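/- arXiv:1510.08036 — 5 statements merged into one kernel-verified Lean document; each statement's English description precedes it below -/
import Mathlib

section
/- For every k ≥ 2 and n ≥ 0, if π ∈ F^k_n(123), then the sequence of root values π(1), π(k+2), π(2k+3), …, π((k+1)(n−1)+1) is strictly decreasing, and the subsequence of π consisting of the values at leaf positions (all positions not of the form (k+1)i+1), read from left to right, is also strictly decreasing. -/
/-- `π` contains the pattern `ρ`. -/
def Contains {m k : ℕ} (π : Equiv.Perm (Fin m)) (ρ : Fin k → Fin k) : Prop :=
  ∃ f : Fin k → Fin m, StrictMono f ∧ ∀ a b : Fin k, π (f a) < π (f b) ↔ ρ a < ρ b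

/-- `π` avoids the pattern `ρ`. -/
def Avoids {m k : ℕ} (π : Equiv.Perm (Fin m)) (ρ : Fin k → Fin k) : Prop :=
  ¬ Contains π ρ

lemma leaf_lt {k n i j : ℕ} (hi : i < n) (hj : j ≤ k) : (k+1)*i + j < (k+1)*n := by
  have h1 : (k+1)*(i+1) ≤ (k+1)*n := Nat.mul_le_mul (le_refl (k+1)) hi
  have h2 : (k+1)*(i+1) = (k+1)*i + (k+1) := by ring
  omega

lemma root_lt {k n i : ℕ} (hi : i < n) : (k+1)*i < (k+1)*n := leaf_lt (j := 0) hi (Nat.zero_le k)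

/-- The defining property of (the permutation associated to) a `k`-ary shrub forest of `n`
shrubs: on each block of `k+1` consecutive positions, the first entry (the root) is smaller
than each of the following `k` entries (the leaves).  (Positions are 0-indexed.) -/
def IsKShrubForest (k n : ℕ) (π : Equiv.Perm (Fin ((k+1)*n))) : Prop :=
  ∀ i j : ℕ, (hi : i < n) → (hj1 : 1 ≤ j) → (hj2 : j ≤ k) →
    π ⟨(k+1)*i, root_lt hi⟩ < π ⟨(k+1)*i + j, leaf_lt hi hj2⟩


/-!
A leaf lies after the root of its shrub and above it, and each root is followed by a larger
leaf of its own shrub. So if two leaves, or two roots, appeared in increasing order, the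
leaf's root (resp. the later root's first leaf) would extend them to an occurrence of `123`.
-/

section Pattern123

variable {m : ℕ} {π : Equiv.Perm (Fin m)}

lemma contains_123_of_lt_of_lt {p q r : Fin m} (hpq : p < q) (hqr : q < r)
    (h₁ : π p < π q) (h₂ : π q < π r) : Contains π (![0, 1, 2] : Fin 3 → Fin 3) := by
  have hmono : StrictMono ![p, q, r] := by
    rw [Fin.strictMono_iff_lt_succ]
    intro i
    fin_cases i <;> assumption
  have hπmono : StrictMono (π ∘ ![p, q, r]) := by
    rw [Fin.strictMono_iff_lt_succ]
    intro i
    fin_cases i <;> assumption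
  have hρ : ∀ a b : Fin 3, (![0, 1, 2] : Fin 3 → Fin 3) a < ![0, 1, 2] b ↔ a < b := by decide
  exact ⟨_, hmono, fun a b => (hπmono.lt_iff_lt).trans (hρ a b).symm⟩

lemma Avoids.apply_lt_of_exists_lt_before (hav : Avoids π (![0, 1, 2] : Fin 3 → Fin 3))
    {a b : Fin m} (hab : a < b) (hr : ∃ r < a, π r < π a) : π b < π a := by
  obtain ⟨r, hra, hπra⟩ := hr
  refine lt_of_le_of_ne (not_lt.1 fun hπab => hav ?_) (π.injective.ne hab.ne')
  exact contains_123_of_lt_of_lt hra hab hπra hπab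

lemma Avoids.apply_lt_of_exists_gt_after (hav : Avoids π (![0, 1, 2] : Fin 3 → Fin 3))
    {a b : Fin m} (hab : a < b) (hc : ∃ c > b, π b < π c) : π b < π a := by
  obtain ⟨c, hbc, hπbc⟩ := hc
  refine lt_of_le_of_ne (not_lt.1 fun hπab => hav ?_) (π.injective.ne hab.ne')
  exact contains_123_of_lt_of_lt hab hbc hπab hπbc

end Pattern123

namespace IsKShrubForest

variable {k n : ℕ} {π : Equiv.Perm (Fin ((k+1)*n))}

lemma exists_root_lt_of_not_dvd (hπ : IsKShrubForest k n π) {a : Fin ((k+1)*n)}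
    (ha : ¬ (k+1) ∣ (a : ℕ)) : ∃ r < a, π r < π a := by
  have hblock : (a : ℕ) / (k+1) < n := Nat.div_lt_of_lt_mul a.isLt
  have hoffset_pos : 0 < (a : ℕ) % (k+1) :=
    Nat.pos_of_ne_zero fun h => ha (Nat.dvd_of_mod_eq_zero h)
  have hoffset_le : (a : ℕ) % (k+1) ≤ k := Nat.le_of_lt_succ (Nat.mod_lt _ k.succ_pos)
  have hdecomp : (k+1) * ((a : ℕ) / (k+1)) + (a : ℕ) % (k+1) = a := Nat.div_add_mod _ _
  refine ⟨⟨(k+1) * ((a : ℕ) / (k+1)), root_lt hblock⟩,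
    Fin.lt_def.2 (by simp only; omega), ?_⟩
  convert hπ _ _ hblock hoffset_pos hoffset_le using 2
  exact Fin.ext hdecomp.symm

lemma root_lt_first_leaf (hπ : IsKShrubForest k n π) (hk : 1 ≤ k) {j : ℕ} (hj : j < n) :
    π ⟨(k+1)*j, root_lt hj⟩ < π ⟨(k+1)*j + 1, leaf_lt hj hk⟩ :=
  hπ j 1 hj le_rfl hk

end IsKShrubForest

/-- In a 123-avoiding `k`-ary shrub forest, the root labels are strictly decreasing
(from left to right), and so are the leaf labels. -/
theorem roots_and_leaves_decreasing (k n : ℕ) (hk : 2 ≤ k)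
    (π : Equiv.Perm (Fin ((k+1)*n)))
    (hπ : IsKShrubForest k n π) (hav : Avoids π (![0, 1, 2] : Fin 3 → Fin 3)) :
    (∀ i j : ℕ, (hi : i < n) → (hj : j < n) → i < j →
        π ⟨(k+1)*j, root_lt hj⟩ < π ⟨(k+1)*i, root_lt hi⟩) ∧
    (∀ a b : Fin ((k+1)*n), a < b → ¬ (k+1) ∣ (a : ℕ) → ¬ (k+1) ∣ (b : ℕ) →
        π b < π a) := by
  constructor
  · intro i j hi hj hij
    have hroots : (⟨(k+1)*i, root_lt hi⟩ : Fin ((k+1)*n)) < ⟨(k+1)*j, root_lt hj⟩ :=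
      Fin.lt_def.2 (Nat.mul_lt_mul_of_pos_left hij k.succ_pos)
    exact hav.apply_lt_of_exists_gt_after hroots
      ⟨_, Fin.lt_def.2 (Nat.lt_succ_self _), hπ.root_lt_first_leaf (by omega) hj⟩
  · intro a b hab ha _
    exact hav.apply_lt_of_exists_lt_before hab (hπ.exists_root_lt_of_not_dvd ha)
end

section
/- For every k ≥ 2 and n ≥ 0, the cardinality of F^k_n(123) equals (1/(kn+1)) · binomial((k+1)n, n). -/
open Finset

lemma pattern_123_eq_id : (![0, 1, 2] : Fin 3 → Fin 3) = id := by
  funext i; fin_cases i <;> rfl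

theorem contains_123_iff {m : ℕ} (π : Equiv.Perm (Fin m)) :
    Contains π ![0, 1, 2] ↔ ∃ a b c, a < b ∧ b < c ∧ π a < π b ∧ π b < π c := by
  constructor
  · rintro ⟨f, hf, hπf⟩
    exact ⟨f 0, f 1, f 2, hf (by decide), hf (by decide), (hπf 0 1).2 (by decide),
      (hπf 1 2).2 (by decide)⟩
  · rintro ⟨a, b, c, hab, hbc, hπab, hπbc⟩
    have hf : StrictMono ![a, b, c] := by
      refine Fin.strictMono_iff_lt_succ.2 fun i => ?_
      fin_cases i <;> assumption
    have hπf : StrictMono (π ∘ ![a, b, c]) := by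
      refine Fin.strictMono_iff_lt_succ.2 fun i => ?_
      fin_cases i <;> assumption
    refine ⟨![a, b, c], hf, fun x y => ?_⟩
    rw [pattern_123_eq_id]
    exact hπf.lt_iff_lt

theorem avoids_123_of_strictAntiOn {m : ℕ} {π : Equiv.Perm (Fin m)} (A : Set (Fin m))
    (hA : StrictAntiOn π A) (hAc : StrictAntiOn π Aᶜ) : Avoids π ![0, 1, 2] := by
  rw [Avoids, contains_123_iff]
  rintro ⟨a, b, c, hab, hbc, hπab, hπbc⟩
  have key : ∀ x y, x < y → π x < π y → ¬(x ∈ A ↔ y ∈ A) := fun x y hxy hπ hiff => by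
    by_cases hx : x ∈ A
    · exact (hA hx (hiff.1 hx) hxy).not_gt hπ
    · exact (hAc hx (fun hy => hx (hiff.2 hy)) hxy).not_gt hπ
  have := key a b hab hπab
  have := key b c hbc hπbc
  have := key a c (hab.trans hbc) (hπab.trans hπbc)
  tauto

section AntitoneGluing

variable {α β : Type*} [LinearOrder α] [LinearOrder β]

noncomputable def revEquivOfCardEq [Fintype α] [Fintype β]
    (h : Fintype.card α = Fintype.card β) : α ≃ β :=
  (Fintype.orderIsoFinOfCardEq α rfl).symm.toEquiv.trans
    (Fin.revPerm.trans (Fintype.orderIsoFinOfCardEq β h.symm).toEquiv)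

theorem strictAnti_revEquivOfCardEq [Fintype α] [Fintype β]
    (h : Fintype.card α = Fintype.card β) : StrictAnti (revEquivOfCardEq h) := fun _ _ hxy =>
  (Fintype.orderIsoFinOfCardEq β h.symm).strictMono
    (Fin.rev_lt_rev.2 ((Fintype.orderIsoFinOfCardEq α rfl).symm.strictMono hxy))

theorem apply_orderEmbOfFin_rev_of_strictAntiOn {s : Finset α} {f : α → β}
    (hf : StrictAntiOn f s) (i : Fin #s) :
    f (s.orderEmbOfFin rfl i.rev) =
      (s.image f).orderEmbOfFin (card_image_of_injOn hf.injOn) i := by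
  refine congrFun (orderEmbOfFin_unique _ (fun i => mem_image_of_mem f (orderEmbOfFin_mem ..))
    fun i j hij => hf (orderEmbOfFin_mem ..) (orderEmbOfFin_mem ..) ?_) i
  exact (s.orderEmbOfFin rfl).strictMono (Fin.rev_lt_rev.2 hij)

theorem eqOn_of_strictAntiOn_of_image_eq {s : Finset α} {f g : α → β}
    (hf : StrictAntiOn f s) (hg : StrictAntiOn g s) (h : s.image f = s.image g) :
    Set.EqOn f g s := by
  intro x hx
  obtain ⟨i, rfl⟩ : x ∈ Set.range (s.orderEmbOfFin rfl) := by
    rwa [range_orderEmbOfFin]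
  rw [← i.rev_rev, apply_orderEmbOfFin_rev_of_strictAntiOn hf,
    apply_orderEmbOfFin_rev_of_strictAntiOn hg]
  simp_rw [h]

variable [Fintype α]

theorem Equiv.Perm.eq_of_strictAntiOn {A : Finset α} {π₁ π₂ : Equiv.Perm α}
    (h₁ : StrictAntiOn π₁ A) (h₁c : StrictAntiOn π₁ (↑A)ᶜ)
    (h₂ : StrictAntiOn π₂ A) (h₂c : StrictAntiOn π₂ (↑A)ᶜ) (h : A.image π₁ = A.image π₂) :
    π₁ = π₂ := by
  have himage_compl : ∀ π : Equiv.Perm α, Aᶜ.image π = (A.image π)ᶜ := fun π => by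
    ext y
    simp only [mem_image, mem_compl, not_exists, not_and]
    exact ⟨fun ⟨x, hx, hxy⟩ z hz hzy => hx (π.injective (hzy.trans hxy.symm) ▸ hz),
      fun hy => ⟨π.symm y, fun h => hy _ h (by simp), by simp⟩⟩
  have hc : Aᶜ.image π₁ = Aᶜ.image π₂ := by rw [himage_compl, himage_compl, h]
  ext x
  by_cases hx : x ∈ A
  · exact eqOn_of_strictAntiOn_of_image_eq h₁ h₂ h hx
  · rw [← coe_compl] at h₁c h₂c
    exact eqOn_of_strictAntiOn_of_image_eq h₁c h₂c hc (mem_compl.2 hx)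

theorem Equiv.Perm.exists_strictAntiOn {A B : Finset α} (h : #A = #B) :
    ∃ π : Equiv.Perm α, StrictAntiOn π A ∧ StrictAntiOn π (↑A)ᶜ ∧ A.image π = B := by
  have hAB : Fintype.card A = Fintype.card B := by simpa using h
  have hAcBc : Fintype.card {x // x ∉ A} = Fintype.card {x // x ∉ B} := by
    simp only [Fintype.card_subtype_compl, Fintype.card_coe, h]
  let e := revEquivOfCardEq hAB
  let f := revEquivOfCardEq hAcBc
  have he : ∀ x (hx : x ∈ A), e.subtypeCongr f x = e ⟨x, hx⟩ := fun x hx => by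
    simp [Equiv.subtypeCongr, Equiv.sumCompl, hx]
  have hf : ∀ x (hx : x ∉ A), e.subtypeCongr f x = f ⟨x, hx⟩ := fun x hx => by
    simp [Equiv.subtypeCongr, Equiv.sumCompl, hx]
  refine ⟨e.subtypeCongr f, fun x hx y hy hxy => ?_, fun x hx y hy hxy => ?_, ?_⟩
  · rw [he x hx, he y hy]
    exact strictAnti_revEquivOfCardEq hAB (show (⟨x, hx⟩ : A) < ⟨y, hy⟩ from hxy)
  · rw [hf x hx, hf y hy]
    exact strictAnti_revEquivOfCardEq hAcBc (show (⟨x, hx⟩ : {x // x ∉ A}) < ⟨y, hy⟩ from hxy)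
  · ext y
    simp only [mem_image]
    constructor
    · rintro ⟨x, hx, rfl⟩
      rw [he x hx]
      exact (e ⟨x, hx⟩).2
    · intro hy
      exact ⟨e.symm ⟨y, hy⟩, (e.symm ⟨y, hy⟩).2, by rw [he _ (e.symm ⟨y, hy⟩).2]; simp⟩

end AntitoneGluing

section CycleLemma

variable {T : ℕ}

theorem exists_lt_forall_le_add [NeZero T] {s : ℕ → ℤ} (hs : ∀ j, s (j + T) = s j - 1) :
    ∃ r < T, ∀ j < T, s r ≤ s (r + j) := by
  -- take the first position where `s` attains its minimum on `[0, T)`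
  obtain ⟨r, hr, hmin⟩ :=
    exists_min_image (range T) (fun r => toLex (s r, r)) ⟨0, mem_range.2 (NeZero.pos T)⟩
  have hmin' : ∀ j < T, s r < s j ∨ s r = s j ∧ r ≤ j := fun j hj =>
    Prod.Lex.toLex_le_toLex.1 (hmin j (mem_range.2 hj))
  rw [mem_range] at hr
  refine ⟨r, hr, fun j hj => ?_⟩
  by_cases hjT : r + j < T
  · have := hmin' _ hjT
    omega
  · have := hmin' (r + j - T) (by omega)
    rw [show r + j = r + j - T + T by omega, hs]
    omega

theorem eq_of_forall_le_add {s : ℕ → ℤ} (hs : ∀ j, s (j + T) = s j - 1) {r r' : ℕ}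
    (hr : r < T) (hr' : r' < T) (h : ∀ j < T, s r ≤ s (r + j))
    (h' : ∀ j < T, s r' ≤ s (r' + j)) : r = r' := by
  wlog hlt : r < r' generalizing r r'
  · rcases (not_lt.1 hlt).lt_or_eq with h₁ | h₁
    · exact (this hr' hr h' h h₁).symm
    · exact h₁.symm
  have h₁ := h (r' - r) (by omega)
  have h₂ := h' (T + r - r') (by omega)
  rw [show r + (r' - r) = r' by omega] at h₁
  rw [show r' + (T + r - r') = r + T by omega, hs] at h₂
  omega

theorem sum_range_natCast_add_eq_sum [NeZero T] (w : ZMod T → ℤ) (r : ℕ) :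
    ∑ i ∈ range T, w ((r + i : ℕ) : ZMod T) = ∑ x, w x := by
  refine sum_nbij' (fun i => ((r + i : ℕ) : ZMod T)) (fun x => (x - r).val)
    (fun _ _ => mem_univ _) (fun x _ => mem_range.2 (ZMod.val_lt _)) (fun i hi => ?_)
    (fun x _ => ?_) fun _ _ => rfl
  · rw [Nat.cast_add, add_sub_cancel_left, ZMod.val_natCast_of_lt (mem_range.1 hi)]
  · rw [Nat.cast_add, ZMod.natCast_zmod_val, add_sub_cancel]

/-- Raney's cycle lemma. -/
theorem existsUnique_forall_sum_range_nonneg [NeZero T] (w : ZMod T → ℤ) (hw : ∑ x, w x = -1) :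
    ∃! c : ZMod T, ∀ j < T, 0 ≤ ∑ i ∈ range j, w (i + c) := by
  let s : ℕ → ℤ := fun j => ∑ i ∈ range j, w i
  have hshift : ∀ r j : ℕ, ∑ i ∈ range j, w (i + r) = s (r + j) - s r := fun r j => by
    simp only [s, sum_range_add, Nat.cast_add, add_comm (r : ZMod T)]
    ring
  have hs : ∀ j, s (j + T) = s j - 1 := fun j => by
    simp only [s, sum_range_add, sum_range_natCast_add_eq_sum, hw]
    ring
  have hgood : ∀ r : ℕ, (∀ j < T, 0 ≤ ∑ i ∈ range j, w (i + r)) ↔ ∀ j < T, s r ≤ s (r + j) :=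
    fun r => forall₂_congr fun j _ => by rw [hshift, sub_nonneg]
  obtain ⟨r, hrT, hr⟩ := exists_lt_forall_le_add hs
  refine ⟨r, (hgood r).2 hr, fun c hc => ?_⟩
  rw [← ZMod.natCast_zmod_val c] at hc ⊢
  rw [eq_of_forall_le_add hs (ZMod.val_lt c) hrT ((hgood _).1 hc) hr]

end CycleLemma

theorem card_filter_mul_card_eq_of_existsUnique_vadd {G α : Type*} [AddGroup G] [Fintype G]
    [AddAction G α] {s : Finset α} (hs : ∀ g : G, ∀ x ∈ s, g +ᵥ x ∈ s) (p : α → Prop)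
    [DecidablePred p] (h : ∀ x ∈ s, ∃! g : G, p (g +ᵥ x)) :
    #{x ∈ s | p x} * Fintype.card G = #s := by
  rw [← card_univ, ← card_product]
  refine card_bij (fun xg _ => -xg.2 +ᵥ xg.1) (fun xg hxg => ?_) (fun xg₁ hxg₁ xg₂ hxg₂ he => ?_)
    fun y hy => ?_
  · simp only [mem_product, mem_filter] at hxg
    exact hs _ _ hxg.1.1
  · simp only [mem_product, mem_filter] at hxg₁ hxg₂
    have hy := hs (-xg₁.2) _ hxg₁.1.1
    have hg : xg₁.2 = xg₂.2 := (h _ hy).unique (by rw [vadd_neg_vadd]; exact hxg₁.1.2)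
      (by rw [he, vadd_neg_vadd]; exact hxg₂.1.2)
    have hx : xg₁.1 = xg₂.1 := by
      simpa only [hg, vadd_neg_vadd] using congrArg (xg₂.2 +ᵥ ·) he
    exact Prod.ext hx hg
  · obtain ⟨g, hg, -⟩ := h y hy
    exact ⟨(g +ᵥ y, g), by simp [hs g y hy, hg], neg_vadd_vadd g y⟩

section ZModBallot

open Pointwise

variable {T : ℕ}

def stepWeight (k : ℕ) (S : Finset (ZMod T)) (x : ZMod T) : ℤ := if x ∈ S then k else -1

def IsBallotZMod (k : ℕ) (S : Finset (ZMod T)) : Prop :=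
  ∀ j < T, 0 ≤ ∑ i ∈ range j, stepWeight k S i

instance {k : ℕ} : DecidablePred (IsBallotZMod k (T := T)) :=
  fun _ => inferInstanceAs (Decidable (∀ _ < _, _))

theorem stepWeight_eq (k : ℕ) (S : Finset (ZMod T)) (x : ZMod T) :
    stepWeight k S x = (k+1) * (if x ∈ S then 1 else 0) - 1 := by
  unfold stepWeight; split_ifs <;> ring

theorem sum_stepWeight [NeZero T] (k : ℕ) (S : Finset (ZMod T)) :
    ∑ x, stepWeight k S x = (k+1) * #S - (T : ℤ) := by
  simp only [stepWeight_eq, sum_sub_distrib, ← mul_sum, sum_boole, filter_univ_mem, sum_const,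
    card_univ, ZMod.card, nsmul_eq_mul, mul_one]

theorem card_isBallotZMod_mul (k n : ℕ) :
    #{S ∈ powersetCard n (univ : Finset (ZMod ((k+1)*n+1))) | IsBallotZMod k S} *
      ((k+1)*n+1) = ((k+1)*n+1).choose n := by
  have hcard := card_filter_mul_card_eq_of_existsUnique_vadd (G := ZMod ((k+1)*n+1))
    (s := powersetCard n (univ : Finset (ZMod ((k+1)*n+1)))) (fun g S hS => ?_)
    (IsBallotZMod k) fun S hS => ?_
  · rwa [ZMod.card, card_powersetCard, card_univ, ZMod.card] at hcard
  · rw [mem_powersetCard] at hS ⊢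
    exact ⟨subset_univ _, (card_vadd_finset g S).trans hS.2⟩
  · have hw : ∑ x, stepWeight k S x = -1 := by
      rw [sum_stepWeight, (mem_powersetCard.1 hS).2]; push_cast; ring
    refine ((Equiv.neg _).existsUnique_congr fun c => ?_).1
      (existsUnique_forall_sum_range_nonneg _ hw)
    refine forall₂_congr fun j _ => ?_
    simp only [stepWeight, Equiv.neg_apply, mem_neg_vadd_finset_iff, vadd_eq_add, add_comm c]

end ZModBallot

/-- Reading the elements of `B` as up-steps of height `k` and the other positions as down-steps
of height one, `B` is ballot when every prefix of the walk stays non-negative. -/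
def IsBallot (k : ℕ) {m : ℕ} (B : Finset (Fin m)) : Prop :=
  ∀ j ≤ m, j ≤ (k+1) * #{b ∈ B | b.val < j}

instance {k m : ℕ} : DecidablePred (IsBallot k (m := m)) :=
  fun _ => inferInstanceAs (Decidable (∀ _ ≤ _, _))

section BallotTransfer

variable {k m : ℕ}

theorem natCast_val_injective : Function.Injective fun b : Fin m => (b.val : ZMod (m+1)) :=
  fun a b h => Fin.ext <| by
    simpa [ZMod.val_natCast_of_lt (Nat.lt_succ_of_lt a.isLt),
      ZMod.val_natCast_of_lt (Nat.lt_succ_of_lt b.isLt)] using congrArg ZMod.val h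

theorem sum_range_stepWeight_image (B : Finset (Fin m)) {j : ℕ} (hj : j ≤ m) :
    ∑ i ∈ range j, stepWeight k (B.image fun b => (b.val : ZMod (m+1))) i =
      (k+1) * #{b ∈ B | b.val < j} - j := by
  have hcount : {i ∈ range j | ((i : ℕ) : ZMod (m+1)) ∈ B.image fun b => (b.val : ZMod (m+1))} =
      {b ∈ B | b.val < j}.map Fin.valEmbedding := by
    ext i
    simp only [mem_filter, mem_range, mem_image, mem_map, Fin.valEmbedding_apply]
    constructor
    · rintro ⟨hi, b, hb, hbi⟩
      obtain rfl : b.val = i := by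
        have := congrArg ZMod.val hbi
        rwa [ZMod.val_natCast_of_lt (Nat.lt_succ_of_lt b.isLt),
          ZMod.val_natCast_of_lt (by omega)] at this
      exact ⟨b, ⟨hb, hi⟩, rfl⟩
    · rintro ⟨b, ⟨hb, hbj⟩, rfl⟩
      exact ⟨hbj, b, hb, rfl⟩
  simp only [stepWeight_eq, sum_sub_distrib, ← mul_sum, sum_boole, hcount, card_map, sum_const,
    card_range, nsmul_eq_mul, mul_one]

theorem isBallotZMod_image_iff (B : Finset (Fin m)) :
    IsBallotZMod k (B.image fun b => (b.val : ZMod (m+1))) ↔ IsBallot k B := by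
  refine forall_congr' fun j => ?_
  rw [Nat.lt_succ_iff]
  refine imp_congr_right fun hj => ?_
  rw [sum_range_stepWeight_image B hj, sub_nonneg]
  exact_mod_cast Iff.rfl

theorem natCast_notMem_of_isBallotZMod {S : Finset (ZMod (m+1))}
    (hw : ∑ x, stepWeight k S x = -1) (hS : IsBallotZMod k S) : ((m : ℕ) : ZMod (m+1)) ∉ S := by
  intro hm
  have hlast : ∑ i ∈ range (m+1), stepWeight k S i =
      ∑ i ∈ range m, stepWeight k S i + k := by
    rw [sum_range_succ, stepWeight, if_pos hm]
  have htotal := sum_range_natCast_add_eq_sum (stepWeight k S) 0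
  simp only [zero_add] at htotal
  have := hS m (Nat.lt_succ_self m)
  omega

theorem exists_image_natCast_val_eq {S : Finset (ZMod (m+1))}
    (hS : ((m : ℕ) : ZMod (m+1)) ∉ S) :
    ∃ B : Finset (Fin m), B.image (fun b => (b.val : ZMod (m+1))) = S := by
  refine ⟨univ.filter fun b : Fin m => (b.val : ZMod (m+1)) ∈ S, ?_⟩
  ext x
  simp only [mem_image, mem_filter, mem_univ, true_and]
  refine ⟨fun ⟨b, hb, hbx⟩ => hbx ▸ hb, fun hx => ?_⟩
  have hxm : x.val ≠ m := by
    intro h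
    have hx' := ZMod.natCast_zmod_val x
    rw [h] at hx'
    exact hS (hx' ▸ hx)
  refine ⟨⟨x.val, by have := ZMod.val_lt x; omega⟩, ?_, ZMod.natCast_zmod_val x⟩
  rwa [ZMod.natCast_zmod_val]

end BallotTransfer

theorem card_isBallot_eq_card_isBallotZMod (k n : ℕ) :
    #{B ∈ powersetCard n (univ : Finset (Fin ((k+1)*n))) | IsBallot k B} =
      #{S ∈ powersetCard n (univ : Finset (ZMod ((k+1)*n+1))) | IsBallotZMod k S} := by
  refine card_bij (fun B _ => B.image fun b => (b.val : ZMod ((k+1)*n+1))) (fun B hB => ?_)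
    (fun B₁ _ B₂ _ h => image_injective natCast_val_injective h) fun S hS => ?_
  · simp only [mem_filter, mem_powersetCard, subset_univ, true_and] at hB ⊢
    rw [card_image_of_injective _ natCast_val_injective, isBallotZMod_image_iff]
    exact hB
  · simp only [mem_filter, mem_powersetCard, subset_univ, true_and] at hS
    have hw : ∑ x, stepWeight k S x = -1 := by
      rw [sum_stepWeight, hS.1]; push_cast; ring
    obtain ⟨B, rfl⟩ := exists_image_natCast_val_eq (natCast_notMem_of_isBallotZMod hw hS.2)
    refine ⟨B, ?_, rfl⟩
    simp only [mem_filter, mem_powersetCard, subset_univ, true_and]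
    rw [← isBallotZMod_image_iff, ← card_image_of_injective _ natCast_val_injective]
    exact hS

theorem card_isBallot_mul (k n : ℕ) :
    #{B ∈ powersetCard n (univ : Finset (Fin ((k+1)*n))) | IsBallot k B} * (k*n+1) =
      ((k+1)*n).choose n := by
  have hcycle := card_isBallotZMod_mul k n
  rw [← card_isBallot_eq_card_isBallotZMod] at hcycle
  have hchoose := Nat.choose_mul_succ_eq ((k+1)*n) n
  rw [show (k+1)*n + 1 - n = k*n + 1 by rw [add_mul, one_mul]; omega] at hchoose
  refine Nat.eq_of_mul_eq_mul_right (show 0 < (k+1)*n + 1 by omega) ?_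
  calc _ = #{B ∈ powersetCard n (univ : Finset (Fin ((k+1)*n))) | IsBallot k B} *
        ((k+1)*n+1) * (k*n+1) := by ring
    _ = _ := by rw [hcycle, hchoose]


theorem Equiv.Perm.card_filter_val_apply_lt {m : ℕ} (π : Equiv.Perm (Fin m)) {j : ℕ}
    (hj : j ≤ m) : #{q | (π q : ℕ) < j} = j := by
  rw [← card_map π.toEmbedding, map_filter, map_univ_equiv]
  simp [Fin.card_filter_val_lt, hj]

theorem Equiv.Perm.strictAntiOn_of_not_lt {α : Type*} [LinearOrder α] {π : Equiv.Perm α}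
    {s : Set α} (h : ∀ x ∈ s, ∀ y ∈ s, x < y → ¬π x < π y) : StrictAntiOn π s :=
  fun x hx y hy hxy =>
    (not_lt.1 (h x hx y hy hxy)).lt_of_ne (π.injective.ne hxy.ne')

section Shrubs

variable {k n : ℕ}

variable (k n) in
def rootPos : Fin n ↪o Fin ((k+1)*n) :=
  OrderEmbedding.ofStrictMono (fun i => ⟨(k+1)*i, root_lt i.isLt⟩) fun _ _ hij =>
    Nat.mul_lt_mul_of_pos_left hij k.succ_pos

variable (k n) in
def roots : Finset (Fin ((k+1)*n)) := univ.map (rootPos k n).toEmbedding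

@[simp]
theorem val_rootPos (i : Fin n) : (rootPos k n i : ℕ) = (k+1)*i := rfl

theorem mem_roots {p : Fin ((k+1)*n)} : p ∈ roots k n ↔ ∃ i, rootPos k n i = p := by
  simp [roots]

theorem card_roots : #(roots k n) = n := by simp [roots]

theorem mem_roots_iff_mod_eq_zero {p : Fin ((k+1)*n)} : p ∈ roots k n ↔ (p : ℕ) % (k+1) = 0 := by
  rw [mem_roots]
  refine ⟨?_, fun hp => ?_⟩
  · rintro ⟨i, rfl⟩
    exact Nat.mul_mod_right _ _
  · refine ⟨⟨p / (k+1), ?_⟩, Fin.ext ?_⟩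
    · exact Nat.div_lt_of_lt_mul p.isLt
    · exact Nat.mul_div_cancel' (Nat.dvd_of_mod_eq_zero hp)

def rootOf (p : Fin ((k+1)*n)) : Fin ((k+1)*n) :=
  rootPos k n ⟨p / (k+1), Nat.div_lt_of_lt_mul p.isLt⟩

theorem rootOf_mem_roots (p : Fin ((k+1)*n)) : rootOf p ∈ roots k n :=
  mem_roots.2 ⟨_, rfl⟩

theorem val_rootOf (p : Fin ((k+1)*n)) : (rootOf p : ℕ) = (k+1) * (p / (k+1)) := rfl

theorem val_rootOf_add_mod (p : Fin ((k+1)*n)) : (rootOf p : ℕ) + p % (k+1) = p :=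
  Nat.div_add_mod p (k+1)

theorem isKShrubForest_iff {π : Equiv.Perm (Fin ((k+1)*n))} :
    IsKShrubForest k n π ↔ ∀ p ∉ roots k n, π (rootOf p) < π p := by
  refine ⟨fun h p hp => ?_, fun h i j hi hj1 hj2 => ?_⟩
  · rw [mem_roots_iff_mod_eq_zero] at hp
    have hmod : (p : ℕ) % (k+1) ≤ k := Nat.le_of_lt_succ (Nat.mod_lt _ k.succ_pos)
    convert h (p / (k+1)) (p % (k+1)) (Nat.div_lt_of_lt_mul p.isLt) (by omega) hmod
    · rfl
    · exact (Nat.div_add_mod p (k+1)).symm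
  · have hjk : j % (k+1) = j := Nat.mod_eq_of_lt (by omega)
    have hmod : ((k+1)*i + j) % (k+1) = j := by rw [Nat.mul_add_mod, hjk]
    have hleaf : (⟨(k+1)*i + j, leaf_lt hi hj2⟩ : Fin ((k+1)*n)) ∉ roots k n := by
      rw [mem_roots_iff_mod_eq_zero]; simp only [hmod]; omega
    convert h _ hleaf
    have := val_rootOf_add_mod (⟨(k+1)*i + j, leaf_lt hi hj2⟩ : Fin ((k+1)*n))
    rw [Fin.val_mk, hmod] at this
    linarith

theorem strictAntiOn_roots_of_avoids_123 (hk : 1 ≤ k) {π : Equiv.Perm (Fin ((k+1)*n))}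
    (hπ : ∀ p ∉ roots k n, π (rootOf p) < π p) (hav : Avoids π ![0, 1, 2]) :
    StrictAntiOn π (roots k n) := by
  refine Equiv.Perm.strictAntiOn_of_not_lt fun r₁ _ r₂ hr₂ hlt hπlt => hav ?_
  obtain ⟨i, rfl⟩ := mem_roots.1 hr₂
  let q : Fin ((k+1)*n) := ⟨(k+1)*i + 1, leaf_lt i.isLt hk⟩
  have hq : (q : ℕ) % (k+1) = 1 := by
    rw [Nat.mul_add_mod, Nat.mod_eq_of_lt (by omega)]
  have hq_root : rootOf q = rootPos k n i := by
    have := val_rootOf_add_mod q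
    rw [hq] at this
    exact Fin.ext (by simp only [q, val_rootPos] at this ⊢; omega)
  have hq_leaf : q ∉ roots k n := by rw [mem_roots_iff_mod_eq_zero, hq]; exact one_ne_zero
  refine (contains_123_iff π).2 ⟨r₁, _, q, hlt, ?_, hπlt, hq_root ▸ hπ q hq_leaf⟩
  exact Fin.mk_lt_mk.2 (Nat.lt_succ_self _)

theorem strictAntiOn_leaves_of_avoids_123 {π : Equiv.Perm (Fin ((k+1)*n))}
    (hπ : ∀ p ∉ roots k n, π (rootOf p) < π p) (hav : Avoids π ![0, 1, 2]) :
    StrictAntiOn π (↑(roots k n))ᶜ := by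
  refine Equiv.Perm.strictAntiOn_of_not_lt fun p₁ hp₁ p₂ _ hlt hπlt => hav ?_
  have hp₁ : p₁ ∉ roots k n := hp₁
  have hroot : rootOf p₁ < p₁ := by
    have := val_rootOf_add_mod p₁
    rw [mem_roots_iff_mod_eq_zero] at hp₁
    exact Fin.lt_def.2 (by omega)
  exact (contains_123_iff π).2 ⟨_, p₁, p₂, hroot, hlt, hπ p₁ hp₁, hπlt⟩

theorem card_filter_roots_gt (i : Fin n) : #{q ∈ roots k n | rootPos k n i < q} = n - 1 - i := by
  rw [roots, filter_map, card_map]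
  simp [filter_lt_eq_Ioi]

theorem mul_card_filter_roots_gt_lt (p : Fin ((k+1)*n)) (hp : p ∉ roots k n) :
    k * #{q ∈ roots k n | rootOf p < q} < #{q ∈ (roots k n)ᶜ | p ≤ q} := by
  -- the positions after `rootOf p` are later roots, fewer than `k` leaves before `p`, and the
  -- leaves from `p` on
  have hcover : Ioi (rootOf p) ⊆
      {q ∈ roots k n | rootOf p < q} ∪ (Ioo (rootOf p) p ∪ {q ∈ (roots k n)ᶜ | p ≤ q}) := by
    intro q hq
    rw [mem_Ioi] at hq
    by_cases hqr : q ∈ roots k n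
    · simp [hqr, hq]
    · by_cases hqp : q < p
      · simp [hq, hqp]
      · simp [hqr, not_lt.1 hqp]
  have hcard := (card_le_card hcover).trans
    ((card_union_le _ _).trans (Nat.add_le_add_left (card_union_le _ _) _))
  have hroots : #{q ∈ roots k n | rootOf p < q} = n - 1 - p / (k+1) := card_filter_roots_gt _
  rw [Fin.card_Ioi, Fin.card_Ioo, hroots] at hcard
  rw [hroots]
  have hmod := val_rootOf_add_mod p
  rw [mem_roots_iff_mod_eq_zero] at hp
  have hmodk : (p : ℕ) % (k+1) < k + 1 := Nat.mod_lt _ k.succ_pos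
  obtain ⟨d, hd⟩ : ∃ d, n = p / (k+1) + d + 1 :=
    ⟨n - p / (k+1) - 1, by have := Nat.div_lt_of_lt_mul p.isLt; omega⟩
  have hN : (k+1)*n = (k+1)*(p / (k+1)) + k*d + d + k + 1 := by nth_rw 1 [hd]; ring
  have hkd : k * (n - 1 - p / (k+1)) = k * d := by rw [show n - 1 - p / (k+1) = d by omega]
  rw [val_rootOf] at hcard hmod
  omega

theorem card_leaves_rootOf_eq_le (r : Fin ((k+1)*n)) :
    #{q ∈ (roots k n)ᶜ | rootOf q = r} ≤ k := by
  calc #{q ∈ (roots k n)ᶜ | rootOf q = r}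
      ≤ #(Ioc (r : ℕ) (r + k)) := by
        refine card_le_card_of_injOn (fun q => (q : ℕ)) (fun q hq => ?_) Fin.val_injective.injOn
        simp only [coe_filter, mem_compl, mem_roots_iff_mod_eq_zero, Set.mem_ofPred_eq] at hq
        have := val_rootOf_add_mod q
        have : (q : ℕ) % (k+1) < k + 1 := Nat.mod_lt _ k.succ_pos
        simp only [coe_Ioc, Set.mem_Ioc, ← hq.2]
        omega
    _ = k := by simp

theorem card_filter_image_roots_val_lt (π : Equiv.Perm (Fin ((k+1)*n))) (j : ℕ) :
    #{b ∈ (roots k n).image π | b.val < j} = #{q ∈ roots k n | (π q).val < j} := by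
  rw [filter_image, card_image_of_injective _ π.injective]

theorem isBallot_image_roots {π : Equiv.Perm (Fin ((k+1)*n))}
    (hπ : ∀ p ∉ roots k n, π (rootOf p) < π p) : IsBallot k ((roots k n).image π) := by
  intro j hj
  let X : Finset (Fin ((k+1)*n)) := {q | (π q : ℕ) < j}
  have hroots : {q ∈ X | q ∈ roots k n} = {q ∈ roots k n | (π q : ℕ) < j} := by
    ext q; simp [X, and_comm]
  have hleaves : #{q ∈ X | q ∉ roots k n} ≤ k * #{q ∈ X | q ∈ roots k n} := by
    refine (card_le_mul_card_image (f := rootOf) _ k fun r _ => (card_le_card fun q hq => ?_).trans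
      (card_leaves_rootOf_eq_le r)).trans (Nat.mul_le_mul_left k (card_le_card fun r hr => ?_))
    · simp only [mem_filter] at hq ⊢
      exact ⟨mem_compl.2 hq.1.2, hq.2⟩
    · obtain ⟨q, hq, rfl⟩ := mem_image.1 hr
      simp only [X, mem_filter, mem_univ, true_and] at hq ⊢
      exact ⟨(Fin.lt_def.1 (hπ q hq.2)).trans hq.1, rootOf_mem_roots q⟩
  have hsplit := card_filter_add_card_filter_not (s := X) (· ∈ roots k n)
  rw [Equiv.Perm.card_filter_val_apply_lt π hj, hroots] at hsplit
  rw [hroots] at hleaves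
  rw [card_filter_image_roots_val_lt]
  linarith

theorem rootOf_lt_of_isBallot {π : Equiv.Perm (Fin ((k+1)*n))}
    (hr : StrictAntiOn π (roots k n)) (hl : StrictAntiOn π (↑(roots k n))ᶜ)
    (hB : IsBallot k ((roots k n).image π)) (p : Fin ((k+1)*n)) (hp : p ∉ roots k n) :
    π (rootOf p) < π p := by
  by_contra hle
  have hlt : π p < π (rootOf p) := (not_lt.1 hle).lt_of_ne
    (π.injective.ne (ne_of_mem_of_not_mem (rootOf_mem_roots p) hp).symm)
  -- the later roots and the leaves from `p` on all take values below `π (rootOf p)`: too many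
  -- for the ballot condition at that value
  let X : Finset (Fin ((k+1)*n)) := {q | (π q).val < π (rootOf p)}
  have hrootsX : {q ∈ roots k n | rootOf p < q} ⊆ X := fun q hq => by
    simp only [mem_filter, X, mem_univ, true_and] at hq ⊢
    exact hr (rootOf_mem_roots p) hq.1 hq.2
  have hleavesX : {q ∈ (roots k n)ᶜ | p ≤ q} ⊆ X := fun q hq => by
    simp only [mem_filter, X, mem_univ, true_and] at hq ⊢
    have hle : π q ≤ π p := (hl.le_iff_ge (by simpa using hq.1) (by simpa using hp)).2 hq.2
    exact hle.trans_lt hlt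
  have hcardX : #{q ∈ roots k n | rootOf p < q} + #{q ∈ (roots k n)ᶜ | p ≤ q} ≤ #X := by
    rw [← card_union_of_disjoint (disjoint_filter_filter disjoint_compl_right)]
    exact card_le_card (union_subset hrootsX hleavesX)
  have hballot := hB (π (rootOf p)) (π (rootOf p)).isLt.le
  rw [card_filter_image_roots_val_lt] at hballot
  have hroots : {q ∈ roots k n | (π q : ℕ) < π (rootOf p)} = {q ∈ roots k n | rootOf p < q} :=
    filter_congr fun q hq => (Fin.lt_def.symm).trans (hr.lt_iff_gt hq (rootOf_mem_roots p))
  have hX : #X = π (rootOf p) := Equiv.Perm.card_filter_val_apply_lt π (π (rootOf p)).isLt.le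
  rw [hroots] at hballot
  have := mul_card_filter_roots_gt_lt p hp
  linarith

theorem card_shrubForests_avoiding_123_eq_card_isBallot (hk : 1 ≤ k) :
    Nat.card {π : Equiv.Perm (Fin ((k+1)*n)) //
        IsKShrubForest k n π ∧ Avoids π (![0, 1, 2] : Fin 3 → Fin 3)} =
      #{B ∈ powersetCard n (univ : Finset (Fin ((k+1)*n))) | IsBallot k B} := by
  classical
  rw [Nat.card_eq_fintype_card, Fintype.card_subtype]
  simp_rw [isKShrubForest_iff]
  refine card_bij (fun π _ => (roots k n).image π) (fun π hπ => ?_) (fun π₁ hπ₁ π₂ hπ₂ h => ?_)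
    fun B hB => ?_
  · simp only [mem_filter, mem_univ, true_and] at hπ ⊢
    refine ⟨mem_powersetCard.2 ⟨subset_univ _, ?_⟩, isBallot_image_roots hπ.1⟩
    rw [card_image_of_injective _ π.injective, card_roots]
  · simp only [mem_filter, mem_univ, true_and] at hπ₁ hπ₂
    exact Equiv.Perm.eq_of_strictAntiOn (strictAntiOn_roots_of_avoids_123 hk hπ₁.1 hπ₁.2)
      (strictAntiOn_leaves_of_avoids_123 hπ₁.1 hπ₁.2)
      (strictAntiOn_roots_of_avoids_123 hk hπ₂.1 hπ₂.2)
      (strictAntiOn_leaves_of_avoids_123 hπ₂.1 hπ₂.2) h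
  · simp only [mem_filter, mem_powersetCard, subset_univ, true_and] at hB
    obtain ⟨π, hr, hl, rfl⟩ :=
      Equiv.Perm.exists_strictAntiOn (A := roots k n) (B := B) (card_roots.trans hB.1.symm)
    refine ⟨π, ?_, rfl⟩
    simp only [mem_filter, mem_univ, true_and]
    exact ⟨rootOf_lt_of_isBallot hr hl hB.2, avoids_123_of_strictAntiOn _ hr hl⟩

end Shrubs

/-- The number of 123-avoiding `k`-ary shrub forests of `n` shrubs is
`(1/(kn+1)) * choose((k+1)n, n)`. -/
theorem card_kShrubForests_avoiding_123 (k n : ℕ) (hk : 2 ≤ k) :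
    (Nat.card { π : Equiv.Perm (Fin ((k+1)*n)) //
        IsKShrubForest k n π ∧ Avoids π (![0, 1, 2] : Fin 3 → Fin 3) } : ℚ) =
      (1 / ((k : ℚ) * (n : ℚ) + 1)) * (((k+1)*n).choose n : ℚ) := by
  have h := card_isBallot_mul k n
  rw [← card_shrubForests_avoiding_123_eq_card_isBallot (by omega : 1 ≤ k)] at h
  rw [← h]
  push_cast
  field_simp
end

section
/- For all positive integers ℓ and m, the number of lattice paths with steps (0,1), (1,0) and (1,1), from (0,0) to (m, ℓm), remaining weakly below the line y = ℓx, equals (1/(ℓm+1)) · Σ_{v=0}^{m} binomial(ℓm+1, m−v) · binomial(ℓm+v, v). -/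
/-!
Encode a path as a word in the steps `east = (1, 0)`, `north = (0, 1)`, `diag = (1, 1)` and give
the step `(x, y)` the weight `l x - y`: the path stays weakly below `y = l x` iff every prefix sum
of its weights is nonnegative. A path with `d` diagonal steps has `m - d` east and `l m - d` north
steps and total weight `0`; appending a north step gives a word of length `L = l m + m - d + 1`
and weight `-1`. By the cycle lemma exactly one of the `L` rotations of such a word has all its
proper prefix sums nonnegative, and since `l ≥ 1` the last step of that rotation is north, so
these rotations are exactly the admissible paths followed by a north step. Hence `L` times the
number of admissible paths with `d` diagonal steps is the multinomial coefficient
`L! / ((m - d)! (l m - d + 1)! d!)`.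
-/

open Finset Function
open scoped Nat

namespace List

def ProperPrefixSumsNonneg (c : List ℤ) : Prop := ∀ i < c.length, 0 ≤ (c.take i).sum

def PrefixSumsNonneg (c : List ℤ) : Prop := ∀ i, 0 ≤ (c.take i).sum

instance : DecidablePred ProperPrefixSumsNonneg := fun c => by
  unfold ProperPrefixSumsNonneg; infer_instance

instance : DecidablePred PrefixSumsNonneg := fun c =>
  decidable_of_iff (∀ i ≤ c.length, 0 ≤ (c.take i).sum) ⟨fun h i => (le_total i c.length).elim (h i)
    fun hi => by simpa [take_of_length_le hi] using h _ le_rfl, fun h i _ => h i⟩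

theorem properPrefixSumsNonneg_append_singleton_iff (c : List ℤ) (x : ℤ) :
    (c ++ [x]).ProperPrefixSumsNonneg ↔ c.PrefixSumsNonneg := by
  refine ⟨fun h i => ?_, fun h i hi => ?_⟩
  · obtain hi | hi := le_or_gt i c.length
    · simpa [take_append, Nat.sub_eq_zero_of_le hi] using h i (by simp; omega)
    · simpa [take_of_length_le hi.le] using h c.length (by simp)
  · simpa [take_append, Nat.sub_eq_zero_of_le (show i ≤ c.length by simp at hi; omega)] using h i

section Rotate

variable {α : Type*} [AddCommGroup α] (c : List α)

theorem sum_take_rotate {k i : ℕ} (hk : k ≤ c.length) (hi : i ≤ c.length) :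
    ((c.rotate k).take i).sum = ((c ++ c).take (k + i)).sum - ((c ++ c).take k).sum := by
  have hck : (c ++ c).take k = c.take k := take_append_of_le_length hk
  have hdrop : (c ++ c).drop k = c.drop k ++ c := drop_append_of_le_length hk
  rw [take_add, sum_append, hck, hdrop, add_sub_cancel_left, rotate_eq_drop_append_take hk,
    take_append, take_append, take_take, length_drop]
  congr 3
  omega

theorem sum_take_append_self_length_add {j : ℕ} (hj : j ≤ c.length) :
    ((c ++ c).take (c.length + j)).sum = c.sum + ((c ++ c).take j).sum := by
  rw [take_append, take_of_length_le (by omega), take_append_of_le_length hj, sum_append]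
  simp

end Rotate

theorem existsUnique_rotate_properPrefixSumsNonneg {c : List ℤ} (hc : c.sum = -1) :
    ∃! k, k < c.length ∧ (c.rotate k).ProperPrefixSumsNonneg := by
  let T : ℕ → ℤ := fun j => ((c ++ c).take j).sum
  let D : ℕ → Prop := fun k => ∀ i < c.length, T k ≤ T (k + i)
  have hdom : ∀ k < c.length, (c.rotate k).ProperPrefixSumsNonneg ↔ D k := fun k hk => by
    rw [ProperPrefixSumsNonneg, length_rotate]
    refine forall₂_congr fun i hi => ?_
    rw [sum_take_rotate c hk.le hi.le, sub_nonneg]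
  have hwrap : ∀ j ≤ c.length, T (c.length + j) = T j - 1 := fun j hj => by
    simp only [T, sum_take_append_self_length_add c hj, hc]; ring
  -- `T a ≤ T b ≤ T (c.length + a) = T a - 1`
  have hcmp : ∀ a b, a < b → b < c.length → D a → ¬ D b := fun a b hab hb ha hb' => by
    have h1 := ha (b - a) (by omega)
    have h2 := hb' (c.length + a - b) (by omega)
    rw [show a + (b - a) = b by omega] at h1
    rw [show b + (c.length + a - b) = c.length + a by omega, hwrap a (by omega)] at h2
    omega
  have hmin : ∃ k, k < c.length ∧ ∀ j < c.length, T k ≤ T j := by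
    have hn : c.length ≠ 0 := by rintro h; simp_all
    obtain ⟨k, hk, hk'⟩ := (Finset.range c.length).exists_min_image T (by simpa using hn)
    exact ⟨k, by simpa using hk, fun j hj => hk' j (by simpa using hj)⟩
  obtain ⟨hk₀, hk₀min⟩ := Nat.find_spec hmin
  set k₀ := Nat.find hmin
  -- the first minimiser of `T` on `[0, c.length)` gives the dominating rotation
  have hD₀ : D k₀ := by
    intro i hi
    by_cases hki : k₀ + i < c.length
    · exact hk₀min _ hki
    obtain ⟨j, hj⟩ : ∃ j, k₀ + i = c.length + j := ⟨_, (Nat.add_sub_of_le (by omega)).symm⟩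
    have hjk : j < k₀ := by omega
    have : T k₀ < T j := lt_of_le_of_ne (hk₀min j (by omega)) fun h =>
      Nat.find_min hmin hjk ⟨by omega, fun j' hj' => h ▸ hk₀min j' hj'⟩
    rw [hj, hwrap j (by omega)]
    omega
  refine ⟨k₀, ⟨hk₀, (hdom _ hk₀).2 hD₀⟩, fun k ⟨hk, hkD⟩ => ?_⟩
  rw [hdom k hk] at hkD
  rcases lt_trichotomy k k₀ with h | h | h
  · exact (hcmp _ _ h hk₀ hkD hD₀).elim
  · exact h
  · exact (hcmp _ _ h hk hD₀ hkD).elim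

end List

theorem Finset.card_eq_mul_card_filter_of_existsUnique_rotate {α : Type*} {T : Finset (List α)}
    {n : ℕ} {P : List α → Prop} [DecidablePred P] (hlen : ∀ u ∈ T, u.length = n)
    (hrot : ∀ u ∈ T, ∀ k, u.rotate k ∈ T) (huniq : ∀ u ∈ T, ∃! k, k < n ∧ P (u.rotate k)) :
    #T = n * #{u ∈ T | P u} := by
  have hfiber (k : ℕ) (hk : k ∈ range n) :
      #(T.bipartiteBelow (fun u k => P (u.rotate k)) k) = #{u ∈ T | P u} := by
    have hk : k ≤ n := (mem_range.1 hk).le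
    have hn : ∀ u ∈ T, u.rotate n = u := fun u hu => hlen u hu ▸ u.rotate_length
    refine card_nbij' (·.rotate k) (·.rotate (n - k)) (fun u hu => ?_) (fun u hu => ?_)
      (fun u hu => ?_) (fun u hu => ?_) <;>
      simp only [coe_bipartiteBelow, coe_filter, Set.mem_ofPred_eq] at hu ⊢
    · exact ⟨hrot u hu.1 k, hu.2⟩
    · rw [List.rotate_rotate, Nat.sub_add_cancel hk, hn u hu.1]
      exact ⟨hrot u hu.1 _, hu.2⟩
    · rw [List.rotate_rotate, Nat.add_sub_cancel' hk, hn u hu.1]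
    · rw [List.rotate_rotate, Nat.sub_add_cancel hk, hn u hu.1]
  have hunique (u : List α) (hu : u ∈ T) :
      #((range n).bipartiteAbove (fun u k => P (u.rotate k)) u) = 1 := by
    rw [card_eq_one_iff_existsUnique]
    simpa using huniq u hu
  simpa using card_mul_eq_card_mul (fun (u : List α) k => P (u.rotate k)) hunique hfiber

theorem Finset.sum_update_sub_one {β : Type*} [DecidableEq β] {s : Finset β} {κ : β → ℕ} {a : β}
    (ha : a ∈ s) (ha0 : κ a ≠ 0) : ∑ b ∈ s, update κ a (κ a - 1) b = ∑ b ∈ s, κ b - 1 := by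
  rw [← add_sum_erase s _ ha, ← add_sum_erase s _ ha, update_self,
    sum_congr rfl fun b hb => update_of_ne (ne_of_mem_erase hb) _ _]
  omega

theorem Nat.multinomial_eq_sum_update {α : Type*} [DecidableEq α] {s : Finset α} {κ : α → ℕ}
    (hκ : ∑ a ∈ s, κ a ≠ 0) :
    Nat.multinomial s κ = ∑ a ∈ s with κ a ≠ 0, Nat.multinomial s (update κ a (κ a - 1)) := by
  have hprod : ∏ b ∈ s, (κ b)! ≠ 0 := prod_ne_zero_iff.2 fun b _ => factorial_ne_zero _
  have hterm (a : α) (ha : a ∈ s) (ha0 : κ a ≠ 0) : (∏ b ∈ s, (κ b)!) *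
      Nat.multinomial s (update κ a (κ a - 1)) = κ a * (∑ b ∈ s, κ b - 1)! := by
    have hfact : ∏ b ∈ s, (κ b)! = κ a * ∏ b ∈ s, (update κ a (κ a - 1) b)! := by
      rw [← mul_prod_erase s _ ha, ← mul_prod_erase s _ ha, update_self, ← mul_assoc,
        mul_factorial_pred ha0]
      exact congrArg _ (prod_congr rfl fun b hb => by rw [update_of_ne (ne_of_mem_erase hb)])
    rw [hfact, mul_assoc, multinomial_spec, sum_update_sub_one ha ha0]
  apply mul_left_cancel₀ hprod
  rw [multinomial_spec, mul_sum, sum_congr rfl fun a ha => hterm a (mem_filter.1 ha).1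
    (mem_filter.1 ha).2, ← sum_mul, sum_filter_ne_zero, mul_factorial_pred hκ]

section Words

variable {α : Type*} [Fintype α] [DecidableEq α]

def wordsWithCounts (κ : α → ℕ) : Finset (List α) :=
  {w ∈ univ.image (List.Vector.toList (n := ∑ a, κ a)) | ∀ a, w.count a = κ a}

theorem List.length_eq_sum_count (w : List α) : w.length = ∑ a, w.count a := by
  simp_rw [← Multiset.coe_count, ← Multiset.coe_card]
  exact (Multiset.sum_count_eq_card fun _ _ => mem_univ _).symm

theorem List.sum_map_eq_sum_count_smul {M : Type*} [AddCommMonoid M] (w : List α) (f : α → M) :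
    (w.map f).sum = ∑ a, w.count a • f a := by
  rw [Finset.sum_list_map_count]
  exact sum_subset (subset_univ _) fun a _ ha => by
    simp [List.count_eq_zero.2 (by simpa using ha)]

theorem mem_wordsWithCounts {κ : α → ℕ} {w : List α} :
    w ∈ wordsWithCounts κ ↔ ∀ a, w.count a = κ a := by
  refine ⟨fun h => (mem_filter.1 h).2, fun h => mem_filter.2 ⟨mem_image.2 ?_, h⟩⟩
  exact ⟨⟨w, by simp_rw [w.length_eq_sum_count, h]⟩, mem_univ _, rfl⟩

theorem length_of_mem_wordsWithCounts {κ : α → ℕ} {w : List α} (hw : w ∈ wordsWithCounts κ) :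
    w.length = ∑ a, κ a := by
  simp_rw [w.length_eq_sum_count, mem_wordsWithCounts.1 hw]

theorem rotate_mem_wordsWithCounts {κ : α → ℕ} {w : List α} (hw : w ∈ wordsWithCounts κ) (k : ℕ) :
    w.rotate k ∈ wordsWithCounts κ := by
  simpa only [mem_wordsWithCounts, (w.rotate_perm k).count_eq] using hw

theorem cons_mem_wordsWithCounts {κ : α → ℕ} {a : α} {w : List α} :
    a :: w ∈ wordsWithCounts κ ↔ κ a ≠ 0 ∧ w ∈ wordsWithCounts (update κ a (κ a - 1)) := by
  simp only [mem_wordsWithCounts, List.count_cons, beq_iff_eq]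
  refine ⟨fun h => ⟨?_, fun b => ?_⟩, fun ⟨ha, h⟩ b => ?_⟩
  · simp [← h a]
  · rcases eq_or_ne a b with rfl | hab
    · simp [← h a]
    · simpa [hab, hab.symm] using h b
  · rcases eq_or_ne a b with rfl | hab
    · simp [h a]; omega
    · simpa [hab, hab.symm] using h b

theorem card_wordsWithCounts (κ : α → ℕ) : #(wordsWithCounts κ) = Nat.multinomial univ κ := by
  induction hN : ∑ a, κ a generalizing κ with
  | zero =>
    obtain rfl : κ = 0 := funext fun a => sum_eq_zero_iff.1 hN a (mem_univ a)
    have : wordsWithCounts (0 : α → ℕ) = {[]} := by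
      ext w
      simp [mem_wordsWithCounts, List.eq_nil_iff_forall_not_mem, List.count_eq_zero]
    simp [this, Nat.multinomial]
  | succ N ih =>
    have hsplit : wordsWithCounts κ = ({a | κ a ≠ 0} : Finset α).biUnion fun a =>
        (wordsWithCounts (update κ a (κ a - 1))).map ⟨(a :: ·), List.cons_injective⟩ := by
      ext w
      cases w with
      | nil =>
        have : ∃ a, κ a ≠ 0 := by
          by_contra! h
          simp [h] at hN
        simpa [mem_wordsWithCounts, eq_comm] using this
      | cons a w => simp [cons_mem_wordsWithCounts]
    have hdisj : Set.PairwiseDisjoint ({a | κ a ≠ 0} : Finset α) fun a =>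
        (wordsWithCounts (update κ a (κ a - 1))).map ⟨(a :: ·), List.cons_injective⟩ := by
      intro a _ b _ hab
      simp only [onFun, disjoint_left, mem_map, Embedding.coeFn_mk]
      rintro _ ⟨u, -, rfl⟩ ⟨v, -, h⟩
      exact hab (List.cons_eq_cons.1 h).1.symm
    rw [hsplit, card_biUnion hdisj, Nat.multinomial_eq_sum_update (by omega)]
    refine sum_congr rfl fun a ha => ?_
    rw [card_map, ih _ (by rw [sum_update_sub_one (mem_univ a) (mem_filter.1 ha).2, hN]; rfl)]

end Words

inductive Step
  | east | north | diag
  deriving DecidableEq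

namespace Step

instance : Fintype Step := ⟨{east, north, diag}, fun s => by cases s <;> simp⟩

theorem sum_univ {M : Type*} [AddCommMonoid M] (f : Step → M) :
    ∑ s, f s = f east + f north + f diag := by
  simp [univ, Fintype.elems, add_assoc]

theorem forall_iff {p : Step → Prop} : (∀ s, p s) ↔ p east ∧ p north ∧ p diag :=
  ⟨fun h => ⟨h _, h _, h _⟩, fun ⟨he, hn, hd⟩ s => by cases s <;> assumption⟩

def counts (e n d : ℕ) : Step → ℕ
  | east => e
  | north => n
  | diag => d

theorem multinomial_counts (e n d : ℕ) :
    Nat.multinomial univ (counts e n d) = (e + n + d).choose e * (n + d).choose d := by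
  rw [show (univ : Finset Step) = insert east (insert north {diag}) from rfl,
    Nat.multinomial_insert (by decide), Nat.multinomial_insert (by decide)]
  simp only [counts, sum_insert (by decide : north ∉ ({diag} : Finset Step)), sum_singleton,
    Nat.multinomial_singleton, mul_one, ← add_assoc]
  rw [Nat.choose_symm_add]

def toVec : Step → ℤ × ℤ
  | east => (1, 0)
  | north => (0, 1)
  | diag => (1, 1)

def weight (l : ℤ) (s : Step) : ℤ := l * s.toVec.1 - s.toVec.2

theorem sum_map_toVec (w : List Step) :
    (w.map toVec).sum =
      (((w.count east + w.count diag : ℕ) : ℤ), ((w.count north + w.count diag : ℕ) : ℤ)) := by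
  rw [List.sum_map_eq_sum_count_smul, sum_univ]
  ext <;> simp [toVec]

theorem sum_map_weight (l : ℤ) (w : List Step) :
    (w.map (weight l)).sum = l * (w.map toVec).sum.1 - (w.map toVec).sum.2 := by
  induction w with
  | nil => simp
  | cons s w ih =>
    simp only [List.map_cons, List.sum_cons, ih, weight, Prod.fst_add, Prod.snd_add]
    ring

theorem mem_wordsWithCounts_counts {w : List Step} {e n d : ℕ} :
    w ∈ wordsWithCounts (counts e n d) ↔
      w.count east = e ∧ w.count north = n ∧ w.count diag = d := by
  rw [mem_wordsWithCounts, forall_iff]; rfl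

theorem append_north_mem_wordsWithCounts {g : List Step} {e n d : ℕ} :
    g ++ [north] ∈ wordsWithCounts (counts e (n + 1) d) ↔ g ∈ wordsWithCounts (counts e n d) := by
  simp [mem_wordsWithCounts_counts, List.count_append]

theorem sum_map_weight_of_mem {l : ℤ} {e n d : ℕ} {w : List Step}
    (hw : w ∈ wordsWithCounts (counts e n d)) :
    (w.map (weight l)).sum = l * (e + d) - (n + d) := by
  obtain ⟨he, hn, hd⟩ := mem_wordsWithCounts_counts.1 hw
  rw [sum_map_weight, sum_map_toVec, he, hn, hd]
  push_cast; ring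

theorem properPrefixSumsNonneg_map_weight_iff {l : ℤ} (hl : 1 ≤ l) {a : List Step}
    (ha : (a.map (weight l)).sum = -1) :
    (a.map (weight l)).ProperPrefixSumsNonneg ↔
      ∃ g, (g.map (weight l)).PrefixSumsNonneg ∧ g ++ [north] = a := by
  constructor
  · intro h
    obtain ⟨g, s, rfl⟩ : ∃ g s, a = g ++ [s] := (a.eq_nil_or_concat').resolve_left
      (by rintro rfl; simp at ha)
    rw [List.map_append, List.map_singleton, List.properPrefixSumsNonneg_append_singleton_iff] at h
    have hg := h g.length
    rw [← List.length_map (weight l), List.take_length] at hg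
    rw [List.map_append, List.sum_append] at ha
    have hs : s = north := by
      cases s <;> simp [weight, toVec] at ha ⊢ <;> omega
    exact ⟨g, h, by rw [hs]⟩
  · rintro ⟨g, hg, rfl⟩
    rwa [List.map_append, List.map_singleton, List.properPrefixSumsNonneg_append_singleton_iff]

def wordsBelowLine (l : ℤ) (e n d : ℕ) : Finset (List Step) :=
  {w ∈ wordsWithCounts (counts e n d) | (w.map (weight l)).PrefixSumsNonneg}

theorem mul_card_wordsBelowLine {l : ℤ} (hl : 1 ≤ l) {e n d : ℕ} (hbal : l * (e + d) = n + d) :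
    (e + (n + 1) + d) * #(wordsBelowLine l e n d) =
      (e + (n + 1) + d).choose e * (n + 1 + d).choose d := by
  set T := wordsWithCounts (counts e (n + 1) d)
  have hT : ∀ u ∈ T, (u.map (weight l)).sum = -1 := fun u hu => by
    rw [sum_map_weight_of_mem hu]; push_cast; linarith
  have hcard : #T = (e + (n + 1) + d) * #{a ∈ T | (a.map (weight l)).ProperPrefixSumsNonneg} := by
    refine card_eq_mul_card_filter_of_existsUnique_rotate (fun u hu => ?_)
      (fun u hu k => rotate_mem_wordsWithCounts hu k) (fun u hu => ?_)
    · rw [length_of_mem_wordsWithCounts hu, sum_univ]; rfl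
    · simpa [List.map_rotate, length_of_mem_wordsWithCounts hu, sum_univ, counts] using
        List.existsUnique_rotate_properPrefixSumsNonneg (hT u hu)
  have hfilter : {a ∈ T | (a.map (weight l)).ProperPrefixSumsNonneg} =
      (wordsBelowLine l e n d).map ⟨(· ++ [north]), List.append_left_injective _⟩ := by
    ext a
    simp only [mem_filter, mem_map, wordsBelowLine, Embedding.coeFn_mk]
    constructor
    · rintro ⟨ha, h⟩
      obtain ⟨g, hg, rfl⟩ := (properPrefixSumsNonneg_map_weight_iff hl (hT a ha)).1 h
      exact ⟨g, ⟨append_north_mem_wordsWithCounts.1 ha, hg⟩, rfl⟩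
    · rintro ⟨g, ⟨hgw, hg⟩, rfl⟩
      have hgT := append_north_mem_wordsWithCounts.2 hgw
      exact ⟨hgT, (properPrefixSumsNonneg_map_weight_iff hl (hT _ hgT)).2 ⟨g, hg, rfl⟩⟩
  rw [← card_map, ← hfilter, ← hcard, card_wordsWithCounts, multinomial_counts]

theorem natCard_subtype_map_toVec (P : List (ℤ × ℤ) → Prop) :
    Nat.card {p : List (ℤ × ℤ) // (∀ s ∈ p, s = (0, 1) ∨ s = (1, 0) ∨ s = (1, 1)) ∧ P p} =
      Nat.card {w : List Step // P (w.map toVec)} := by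
  have hmem (w : List Step) : ∀ s ∈ w.map toVec, s = (0, 1) ∨ s = (1, 0) ∨ s = (1, 1) := by
    intro s hs
    obtain ⟨t, -, rfl⟩ := List.mem_map.1 hs
    cases t <;> simp [toVec]
  have hinj : Injective toVec := by
    intro s t; cases s <;> cases t <;> simp [toVec]
  refine (Nat.card_eq_of_bijective (fun w => ⟨w.1.map toVec, hmem w.1, w.2⟩)
    ⟨fun v w h => Subtype.ext (List.map_injective_iff.2 hinj (congrArg Subtype.val h)), ?_⟩).symm
  rintro ⟨p, hp, hP⟩
  obtain ⟨w, rfl⟩ : p ∈ Set.range (List.map toVec) := by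
    rw [Set.range_list_map]
    intro s hs
    rcases hp s hs with rfl | rfl | rfl
    exacts [⟨north, rfl⟩, ⟨east, rfl⟩, ⟨diag, rfl⟩]
  exact ⟨⟨w, hP⟩, rfl⟩

theorem prefixSumsNonneg_map_weight_iff (l : ℤ) (w : List Step) :
    (w.map (weight l)).PrefixSumsNonneg ↔
      ∀ i, (((w.map toVec).take i).sum).2 ≤ l * (((w.map toVec).take i).sum).1 := by
  refine forall_congr' fun i => ?_
  rw [← List.map_take, ← List.map_take, sum_map_weight, sub_nonneg]

theorem natCard_pathsBelowLine_eq_sum {l m : ℕ} (hl : 0 < l) :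
    Nat.card {w : List Step //
        (w.map toVec).sum = ((m : ℤ), (l : ℤ) * m) ∧ (w.map (weight l)).PrefixSumsNonneg} =
      ∑ d ∈ range (m + 1), #(wordsBelowLine l (m - d) (l * m - d) d) := by
  have hdisj : Set.PairwiseDisjoint (range (m + 1) : Set ℕ)
      fun d => wordsBelowLine l (m - d) (l * m - d) d := by
    intro d _ d' _ hdd'
    simp only [onFun, disjoint_left, wordsBelowLine, mem_filter, mem_wordsWithCounts_counts]
    rintro w ⟨⟨-, -, rfl⟩, -⟩ ⟨⟨-, -, rfl⟩, -⟩
    exact hdd' rfl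
  have hlm : m ≤ l * m := Nat.le_mul_of_pos_left m hl
  rw [← card_biUnion hdisj, ← Nat.card_eq_finsetCard]
  refine Nat.card_congr (Equiv.subtypeEquivRight fun w => ?_)
  simp only [mem_biUnion, mem_range, wordsBelowLine, mem_filter, mem_wordsWithCounts_counts,
    sum_map_toVec, Prod.ext_iff]
  push_cast
  constructor
  · rintro ⟨⟨he, hn⟩, hw⟩
    exact ⟨by omega, ⟨by omega, by omega, rfl⟩, hw⟩
  · rintro ⟨hd, ⟨he, hn, -⟩, hw⟩
    exact ⟨⟨by omega, by omega⟩, hw⟩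

theorem mul_card_wordsBelowLine_of_le {l m d : ℕ} (hl : 0 < l) (hd : d ≤ m) :
    (l * m + 1) * #(wordsBelowLine l (m - d) (l * m - d) d) =
      (l * m + 1).choose d * (l * m + (m - d)).choose (m - d) := by
  have hdlm : d ≤ l * m := hd.trans (Nat.le_mul_of_pos_left m hl)
  have h := mul_card_wordsBelowLine (l := l) (e := m - d) (n := l * m - d) (d := d)
    (by exact_mod_cast hl) (by push_cast [hd, hdlm]; ring)
  set a := l * m
  set v := m - d
  rw [show v + (a - d + 1) + d = a + v + 1 by omega, show a - d + 1 + d = a + 1 by omega] at h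
  have hchoose : (a + v).choose v * (a + v + 1) = (a + v + 1).choose v * (a + 1) := by
    rw [Nat.choose_mul_succ_eq, show a + v + 1 - v = a + 1 by omega]
  apply Nat.eq_of_mul_eq_mul_left (by omega : 0 < a + v + 1)
  calc (a + v + 1) * ((a + 1) * #(wordsBelowLine l v (a - d) d))
      = (a + 1) * ((a + v + 1) * #(wordsBelowLine l v (a - d) d)) := by ring
    _ = (a + v + 1).choose v * (a + 1) * (a + 1).choose d := by rw [h]; ring
    _ = (a + v + 1) * ((a + 1).choose d * (a + v).choose v) := by rw [← hchoose]; ring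

end Step

open Step in
theorem schroeder_lattice_paths_general (l m : ℕ) (hl : 0 < l) :
    (Nat.card { p : List (ℤ × ℤ) //
        (∀ s ∈ p, s = ((0 : ℤ), (1 : ℤ)) ∨ s = ((1 : ℤ), (0 : ℤ)) ∨ s = ((1 : ℤ), (1 : ℤ))) ∧
        p.sum = ((m : ℤ), (l : ℤ) * (m : ℤ)) ∧
        ∀ i : ℕ, ((p.take i).sum).2 ≤ (l : ℤ) * ((p.take i).sum).1 } : ℚ) =
      (1 / ((l : ℚ) * (m : ℚ) + 1)) *
        ∑ v ∈ Finset.range (m+1), ((l*m+1).choose (m-v) : ℚ) * ((l*m+v).choose v : ℚ) := by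
  simp_rw [natCard_subtype_map_toVec, ← prefixSumsNonneg_map_weight_iff]
  rw [natCard_pathsBelowLine_eq_sum hl, mul_sum, ← sum_range_reflect]
  push_cast
  refine sum_congr rfl fun d hd => ?_
  have hd : d ≤ m := Nat.lt_succ_iff.1 (mem_range.1 hd)
  have hcard := mul_card_wordsBelowLine_of_le hl (Nat.sub_le m d)
  rw [Nat.sub_sub_self hd] at hcard ⊢
  rw [one_div_mul_eq_div, eq_div_iff (by positivity)]
  exact_mod_cast (mul_comm _ _).trans hcard

/-- **Schröder's theorem.** The number of lattice paths with steps `(0,1)`, `(1,0)` and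
`(1,1)` from `(0,0)` to `(m, l*m)` remaining weakly below the line `y = l*x` equals
`(1/(lm+1)) * Σ_{v=0}^{m} choose(lm+1, m-v) * choose(lm+v, v)`. -/
theorem schroeder_lattice_paths (l m : ℕ) (hl : 0 < l) (hm : 0 < m) :
    (Nat.card { p : List (ℤ × ℤ) //
        (∀ s ∈ p, s = ((0 : ℤ), (1 : ℤ)) ∨ s = ((1 : ℤ), (0 : ℤ)) ∨ s = ((1 : ℤ), (1 : ℤ))) ∧
        p.sum = ((m : ℤ), (l : ℤ) * (m : ℤ)) ∧
        ∀ i : ℕ, ((p.take i).sum).2 ≤ (l : ℤ) * ((p.take i).sum).1 } : ℚ) =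
      (1 / ((l : ℚ) * (m : ℚ) + 1)) *
        ∑ v ∈ Finset.range (m+1), ((l*m+1).choose (m-v) : ℚ) * ((l*m+v).choose v : ℚ) :=
  schroeder_lattice_paths_general l m hl
end

section
/- Let ℓ be a positive integer and S a finite set of steps in ℤ × ℤ. For every m ≥ 0, the number of lattice paths with step set S from (0,0) to (m, ℓm) remaining weakly below the line y = ℓx equals the number of lattice paths with step set {(x+y, ℓx−y) : (x,y) ∈ S} from (0,0) to ((ℓ+1)m, 0) remaining weakly above the x-axis. -/
/-!
The linear map `(x, y) ↦ (x + y, l x - y)` has determinant `-(l + 1) ≠ 0`, so it is injective,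
and it sends `(m, l m)` to `((l + 1) m, 0)` while turning the height `y - l x` below the line
`y = l x` into the height above the `x`-axis. Mapping every step of a path through it is
therefore a bijection between the two families of paths.
-/

open Function

theorem Nat.card_subtype_eq_of_injective {α β : Type*} {g : α → β} (hg : Injective g)
    {P : α → Prop} {Q : β → Prop} (hPQ : ∀ a, Q (g a) ↔ P a)
    (hQ : ∀ b, Q b → b ∈ Set.range g) :
    Nat.card {a // P a} = Nat.card {b // Q b} := by
  refine Nat.card_congr (Equiv.ofBijective (fun a => ⟨g a.1, (hPQ a.1).2 a.2⟩) ⟨?_, ?_⟩)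
  · intro a a' h
    exact Subtype.ext (hg (congrArg Subtype.val h))
  · rintro ⟨b, hb⟩
    obtain ⟨a, rfl⟩ := hQ b hb
    exact ⟨⟨a, (hPQ a).1 hb⟩, rfl⟩

namespace LatticePath

def stepTransform (l : ℤ) : ℤ × ℤ →+ ℤ × ℤ where
  toFun t := (t.1 + t.2, l * t.1 - t.2)
  map_zero' := by simp
  map_add' a b := by ext <;> simp only [Prod.fst_add, Prod.snd_add] <;> ring

variable {l : ℤ}

@[simp]
theorem stepTransform_apply (t : ℤ × ℤ) : stepTransform l t = (t.1 + t.2, l * t.1 - t.2) :=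
  rfl

theorem stepTransform_injective (hl : l + 1 ≠ 0) : Injective (stepTransform l) := by
  intro a b h
  simp only [stepTransform_apply, Prod.mk.injEq] at h
  obtain ⟨h₁, h₂⟩ := h
  have hx : a.1 = b.1 := mul_left_cancel₀ hl (by linear_combination h₁ + h₂)
  exact Prod.ext hx (by linarith)

theorem stepTransform_eq_iff (hl : l + 1 ≠ 0) (v : ℤ × ℤ) (m : ℤ) :
    stepTransform l v = ((l + 1) * m, 0) ↔ v = (m, l * m) := by
  have hm : stepTransform l (m, l * m) = ((l + 1) * m, 0) := by
    ext <;> simp only [stepTransform_apply] <;> ring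
  rw [← hm, (stepTransform_injective hl).eq_iff]

theorem zero_le_stepTransform_snd_iff (v : ℤ × ℤ) : 0 ≤ (stepTransform l v).2 ↔ v.2 ≤ l * v.1 :=
  sub_nonneg

end LatticePath

open LatticePath in
theorem lattice_path_transformation_general (l : ℕ) (S : Finset (ℤ × ℤ)) (m : ℕ) :
    Nat.card { p : List (ℤ × ℤ) //
        (∀ s ∈ p, s ∈ S) ∧
        p.sum = ((m : ℤ), (l : ℤ) * (m : ℤ)) ∧
        ∀ i : ℕ, ((p.take i).sum).2 ≤ (l : ℤ) * ((p.take i).sum).1 } =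
      Nat.card { p : List (ℤ × ℤ) //
        (∀ s ∈ p, ∃ t ∈ S, s = (t.1 + t.2, (l : ℤ) * t.1 - t.2)) ∧
        p.sum = ((((l : ℤ) + 1) * (m : ℤ)), (0 : ℤ)) ∧
        ∀ i : ℕ, (0 : ℤ) ≤ ((p.take i).sum).2 } := by
  have hl : (l : ℤ) + 1 ≠ 0 := by positivity
  have hF := stepTransform_injective hl
  refine Nat.card_subtype_eq_of_injective (List.map_injective_iff.2 hF) (fun p => ?_) ?_
  · simp only [← stepTransform_apply, List.forall_mem_map, hF.eq_iff, exists_eq_right',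
      ← List.map_take, ← map_list_sum, stepTransform_eq_iff hl, zero_le_stepTransform_snd_iff]
  · rintro q ⟨hS, -, -⟩
    rw [Set.range_list_map]
    intro s hs
    obtain ⟨t, -, rfl⟩ := hS s hs
    exact ⟨t, rfl⟩

/-- **Banderier–Wallner.** Lattice paths with step set `S` from `(0,0)` to `(m, l*m)`
remaining weakly below `y = l*x` are equinumerous with lattice paths with step set
`{(x+y, l*x-y) : (x,y) ∈ S}` from `(0,0)` to `((l+1)*m, 0)` remaining weakly above the
`x`-axis. -/
theorem lattice_path_transformation (l : ℕ) (hl : 0 < l) (S : Finset (ℤ × ℤ)) (m : ℕ) :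
    Nat.card { p : List (ℤ × ℤ) //
        (∀ s ∈ p, s ∈ S) ∧
        p.sum = ((m : ℤ), (l : ℤ) * (m : ℤ)) ∧
        ∀ i : ℕ, ((p.take i).sum).2 ≤ (l : ℤ) * ((p.take i).sum).1 } =
      Nat.card { p : List (ℤ × ℤ) //
        (∀ s ∈ p, ∃ t ∈ S, s = (t.1 + t.2, (l : ℤ) * t.1 - t.2)) ∧
        p.sum = ((((l : ℤ) + 1) * (m : ℤ)), (0 : ℤ)) ∧
        ∀ i : ℕ, (0 : ℤ) ≤ ((p.take i).sum).2 } :=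
  lattice_path_transformation_general l S m
end

section
/- For every k ≥ 2 and n ≥ 0, the cardinality of F^k_n(231) equals the number of NE lattice paths from (0,0) to ((k+1)n, kn) that stay weakly below the line y = (k/(k+1))x, i.e. such that every visited point (x,y) satisfies (k+1)y ≤ kx. -/
/-!
Feed the entries of a 231-avoiding permutation `π` of `Fin m` through a stack, popping greedily:
after `x` entries have been read, the `c x` entries output so far are those smaller than every
later entry. The function `c` is monotone, `c x ≤ x`, `c m = m`, and it determines `π`: the entry
`j` is popped at the first time `T > j` at which the stack height `x - c x` is back to its value
before `j` was pushed, and `π j = c j + (T - j - 1)`. Conversely this formula turns every such `c`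
into a 231-avoiding permutation with output function `c`.

For a 231-avoider the shrub condition says that each root `r` is smaller than every later entry,
i.e. `c r < c (r + 1)`. Removing these forced outputs leaves increments
`e x = c (x + 1) - c x - [k + 1 ∣ x] ≥ 0`, and since `⌈x / (k + 1)⌉` roots precede `x`, the
condition `c x ≤ x` becomes `(k + 1) (e 0 + ⋯ + e (x - 1)) ≤ k x`. This is the condition that the
path `E N^(e 0) E N^(e 1) ⋯` stays weakly below the line `y = k x / (k + 1)`.
-/

open Finset

namespace ShrubForest

variable {m : ℕ}

theorem avoids_231_iff (π : Equiv.Perm (Fin m)) :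
    Avoids π ![1, 2, 0] ↔ ∀ a b c : Fin m, a < b → b < c → π c < π a → π b < π a := by
  constructor
  · intro h a b c hab hbc hca
    by_contra! hba
    have hab' : π a < π b := lt_of_le_of_ne hba (π.injective.ne hab.ne)
    refine h ⟨![a, b, c], ?_, fun x y => ?_⟩
    · refine Fin.strictMono_iff_lt_succ.2 fun i => ?_
      fin_cases i <;> assumption
    · fin_cases x <;> fin_cases y <;> simp <;> order
  · rintro h ⟨f, hf, hord⟩
    have h01 : π (f 0) < π (f 1) := (hord 0 1).2 (by decide)
    have h20 : π (f 2) < π (f 0) := (hord 2 0).2 (by decide)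
    exact (h01.trans (h (f 0) (f 1) (f 2) (hf (by decide)) (hf (by decide)) h20)).false

theorem card_filter_val_Ioo {a b : ℕ} (hb : b ≤ m) :
    #{i : Fin m | a < (i : ℕ) ∧ (i : ℕ) < b} = b - a - 1 := by
  rw [← card_map Fin.valEmbedding, ← Nat.card_Ioo]
  congr 1
  ext v
  simp only [mem_map, mem_filter, mem_univ, true_and, Fin.valEmbedding_apply, mem_Ioo]
  exact ⟨fun ⟨i, hi, hiv⟩ => hiv ▸ hi, fun hv => ⟨⟨v, by omega⟩, hv, rfl⟩⟩

theorem card_filter_apply_lt (π : Equiv.Perm (Fin m)) {v : ℕ} (hv : v ≤ m) :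
    #{i : Fin m | (π i : ℕ) < v} = v := by
  rw [card_equiv π (t := {u : Fin m | (u : ℕ) < v}) (by simp), Fin.card_filter_val_lt,
    min_eq_right hv]

def belowSuffix (π : Equiv.Perm (Fin m)) (x : ℕ) : Finset (Fin m) :=
  {j | ∀ t : Fin m, x ≤ t → π j < π t}

def outCount (π : Equiv.Perm (Fin m)) (x : ℕ) : ℕ := #(belowSuffix π x)

variable {π : Equiv.Perm (Fin m)} {x : ℕ} {j : Fin m}

@[simp]
theorem mem_belowSuffix : j ∈ belowSuffix π x ↔ ∀ t : Fin m, x ≤ t → π j < π t := by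
  simp [belowSuffix]

theorem lt_of_mem_belowSuffix (h : j ∈ belowSuffix π x) : (j : ℕ) < x := by
  by_contra! hj
  exact lt_irrefl _ (mem_belowSuffix.1 h j hj)

theorem belowSuffix_mono (π : Equiv.Perm (Fin m)) : Monotone (belowSuffix π) :=
  fun _ _ hxy _ hj => mem_belowSuffix.2 fun t ht => mem_belowSuffix.1 hj t (hxy.trans ht)

theorem outCount_mono (π : Equiv.Perm (Fin m)) : Monotone (outCount π) :=
  fun _ _ hxy => card_le_card (belowSuffix_mono π hxy)

theorem outCount_le (π : Equiv.Perm (Fin m)) (x : ℕ) : outCount π x ≤ x := by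
  simpa [outCount] using card_le_card_of_injOn (t := range x) Fin.val
    (fun j hj => mem_range.2 (lt_of_mem_belowSuffix hj)) Fin.val_injective.injOn

theorem belowSuffix_of_le (π : Equiv.Perm (Fin m)) (hx : m ≤ x) : belowSuffix π x = univ :=
  eq_univ_of_forall fun _ => mem_belowSuffix.2 fun t ht => absurd (t.isLt.trans_le hx) (not_lt.2 ht)

theorem outCount_of_le (π : Equiv.Perm (Fin m)) (hx : m ≤ x) : outCount π x = m := by
  rw [outCount, belowSuffix_of_le π hx, card_univ, Fintype.card_fin]

theorem apply_lt_outCount_iff : (π j : ℕ) < outCount π x ↔ j ∈ belowSuffix π x := by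
  constructor
  · intro h
    by_contra hj
    refine (card_le_card fun i hi => ?_).trans (card_filter_apply_lt π (π j).isLt.le).le
      |>.not_gt h
    obtain ⟨t, ht, hti⟩ := not_forall₂.1 (mt mem_belowSuffix.2 hj)
    simpa using (mem_belowSuffix.1 hi t ht).trans_le (not_lt.1 hti)
  · intro hj
    refine Nat.lt_of_lt_of_le (Nat.lt_succ_self _) ?_
    rw [← card_filter_apply_lt π (Nat.succ_le_of_lt (π j).isLt)]
    refine card_le_card fun i hi => mem_belowSuffix.2 fun t ht => ?_
    have : π i ≤ π j := Fin.le_def.2 (Nat.lt_succ_iff.1 (by simpa using hi))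
    exact this.trans_lt (mem_belowSuffix.1 hj t ht)

theorem outCount_lt_succ_iff (hx : x < m) :
    outCount π x < outCount π (x + 1) ↔ ∀ t : Fin m, x < t → π ⟨x, hx⟩ < π t := by
  have hx_mem : ⟨x, hx⟩ ∈ belowSuffix π (x + 1) ↔ ∀ t : Fin m, x < t → π ⟨x, hx⟩ < π t := by
    simp
  rw [← hx_mem]
  constructor
  · intro h
    obtain ⟨i, hi, hi'⟩ := exists_of_ssubset
      (ssubset_of_subset_of_ne (belowSuffix_mono π x.le_succ)
        fun he => h.ne (by rw [outCount, outCount, he]))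
    obtain ⟨t, ht, hti⟩ := not_forall₂.1 (mt mem_belowSuffix.2 hi')
    have htx : (t : ℕ) = x := le_antisymm (not_lt.1 fun h' => hti (mem_belowSuffix.1 hi t h')) ht
    obtain rfl : t = ⟨x, hx⟩ := Fin.ext htx
    exact mem_belowSuffix.2 fun s hs => (not_lt.1 hti).trans_lt (mem_belowSuffix.1 hi s hs)
  · intro h
    refine card_lt_card (ssubset_iff_of_subset (belowSuffix_mono π x.le_succ) |>.2 ⟨_, h, ?_⟩)
    exact fun h' => (lt_of_mem_belowSuffix h').false

theorem exists_mem_belowSuffix (π : Equiv.Perm (Fin m)) (j : Fin m) :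
    ∃ x, j ∈ belowSuffix π x :=
  ⟨m, by simp [belowSuffix_of_le π le_rfl]⟩

/-- In stack sorting, the number of entries read when `π j` is popped. -/
noncomputable def popTime (π : Equiv.Perm (Fin m)) (j : Fin m) : ℕ :=
  Nat.find (exists_mem_belowSuffix π j)

theorem popTime_le_iff : popTime π j ≤ x ↔ j ∈ belowSuffix π x :=
  ⟨fun h => belowSuffix_mono π h (Nat.find_spec (exists_mem_belowSuffix π j)),
    fun h => Nat.find_min' _ h⟩

theorem lt_popTime : (j : ℕ) < popTime π j :=
  lt_of_mem_belowSuffix (popTime_le_iff.1 le_rfl)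

theorem popTime_le : popTime π j ≤ m :=
  popTime_le_iff.2 (by simp [belowSuffix_of_le π le_rfl])

theorem exists_apply_lt_of_lt_popTime (hjx : (j : ℕ) < x) (h : x < popTime π j) :
    ∃ t : Fin m, x ≤ t ∧ π t < π j := by
  have hj : j ∉ belowSuffix π x := mt popTime_le_iff.2 (not_le.2 h)
  obtain ⟨t, ht, htj⟩ := by simpa using hj
  exact ⟨t, ht, lt_of_le_of_ne htj (π.injective.ne (Fin.ne_of_val_ne (by omega)))⟩

section Avoids231

variable (hπ : Avoids π ![1, 2, 0])
include hπ

theorem apply_lt_of_lt_popTime {i : Fin m} (hji : j < i) (hi : (i : ℕ) < popTime π j) :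
    π i < π j := by
  obtain ⟨t, hit, htj⟩ := exists_apply_lt_of_lt_popTime hji hi
  rcases (Fin.le_iff_val_le_val.2 hit).lt_or_eq with hit | rfl
  · exact (avoids_231_iff π).1 hπ j i t hji hit htj
  · exact htj

theorem mem_belowSuffix_of_lt {i : Fin m} (hij : i < j) (h : π i < π j) :
    i ∈ belowSuffix π j := by
  refine mem_belowSuffix.2 fun t ht => ?_
  rcases (Fin.le_iff_val_le_val.2 ht).lt_or_eq with hjt | rfl
  · by_contra! hti
    have hti : π t < π i := lt_of_le_of_ne hti (π.injective.ne (ne_of_gt (hij.trans hjt)))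
    exact ((avoids_231_iff π).1 hπ i j t hij hjt hti).asymm h
  · exact h

theorem filter_val_apply_lt_eq :
    ({i | (π i : ℕ) < π j} : Finset (Fin m)) =
      belowSuffix π j ∪ ({i | (j : ℕ) < i ∧ (i : ℕ) < popTime π j} : Finset (Fin m)) := by
  ext i
  simp only [mem_filter, mem_univ, true_and, mem_union, mem_belowSuffix]
  constructor
  · intro hij
    rcases lt_trichotomy i j with hij' | rfl | hji
    · exact Or.inl (mem_belowSuffix.1 (mem_belowSuffix_of_lt hπ hij' hij))
    · exact absurd hij (lt_irrefl _)
    · refine Or.inr ⟨hji, not_le.1 fun h => ?_⟩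
      exact (mem_belowSuffix.1 (popTime_le_iff.1 le_rfl) i h).asymm hij
  · rintro (h | ⟨hji, hi⟩)
    · exact h j le_rfl
    · exact apply_lt_of_lt_popTime hπ hji hi

theorem val_apply_add_eq : (π j : ℕ) + j + 1 = outCount π j + popTime π j := by
  have hdisj : Disjoint (belowSuffix π j)
      ({i | (j : ℕ) < i ∧ (i : ℕ) < popTime π j} : Finset (Fin m)) :=
    disjoint_left.2 fun i hi hi' => by
      have := lt_of_mem_belowSuffix hi
      simp only [mem_filter] at hi'
      omega
  have hcard := congrArg card (filter_val_apply_lt_eq hπ (j := j))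
  rw [card_filter_apply_lt π (π j).isLt.le, card_union_of_disjoint hdisj,
    card_filter_val_Ioo popTime_le] at hcard
  have := lt_popTime (π := π) (j := j)
  rw [outCount]
  omega

theorem outCount_add_lt_of_lt_popTime (hjx : (j : ℕ) < x) (hx : x < popTime π j) :
    outCount π x + j < outCount π j + x := by
  obtain ⟨t₀, ht₀, ht₀j⟩ := exists_apply_lt_of_lt_popTime hjx hx
  have hsub : belowSuffix π x ⊆
      belowSuffix π j ∪ ({i | (j : ℕ) < i ∧ (i : ℕ) < x} : Finset (Fin m)) := by
    intro i hi
    have hix := lt_of_mem_belowSuffix hi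
    have hij : π i < π j := (mem_belowSuffix.1 hi t₀ ht₀).trans ht₀j
    rcases lt_trichotomy i j with hij' | rfl | hji
    · exact mem_union_left _ (mem_belowSuffix_of_lt hπ hij' hij)
    · exact absurd hij (lt_irrefl _)
    · exact mem_union_right _ (by simp [hji, hix])
  have hcard := (card_le_card hsub).trans (card_union_le _ _)
  rw [card_filter_val_Ioo (hx.le.trans popTime_le)] at hcard
  rw [outCount, outCount]
  omega

end Avoids231

structure IsBallotSeq (m : ℕ) (c : ℕ → ℕ) : Prop where
  mono : Monotone c
  le_self : ∀ x, c x ≤ x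
  eq_of_le : ∀ x, m ≤ x → c x = m

theorem isBallotSeq_outCount (π : Equiv.Perm (Fin m)) : IsBallotSeq m (outCount π) :=
  ⟨outCount_mono π, outCount_le π, fun _ => outCount_of_le π⟩

namespace IsBallotSeq

variable {c : ℕ → ℕ}

theorem apply_le (hc : IsBallotSeq m c) (x : ℕ) : c x ≤ m :=
  (hc.mono (le_max_left x m)).trans_eq (hc.eq_of_le _ (le_max_right x m))

theorem exists_popTime (hc : IsBallotSeq m c) (j : Fin m) :
    ∃ x, (j : ℕ) < x ∧ c j + x ≤ c x + j :=
  ⟨m, j.isLt, by have := hc.le_self j; rw [hc.eq_of_le m le_rfl]; omega⟩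

/-- With `x - c x` read as the height of the stack after `x` entries, this is the first time
after `j` at which the stack is back to its height before `j` was pushed. -/
noncomputable def popTime (hc : IsBallotSeq m c) (j : Fin m) : ℕ := Nat.find (hc.exists_popTime j)

/-- The entry of the permutation recovered from `c`: the entries popped before `j` are the
`c j` popped before `j` was pushed and the ones pushed above it. -/
noncomputable def entry (hc : IsBallotSeq m c) (j : Fin m) : ℕ := c j + (hc.popTime j - (j + 1))

variable {hc : IsBallotSeq m c} {x : ℕ} {i j : Fin m}

theorem lt_popTime : (j : ℕ) < hc.popTime j := (Nat.find_spec (hc.exists_popTime j)).1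

theorem add_popTime_le : c j + hc.popTime j ≤ c (hc.popTime j) + j :=
  (Nat.find_spec (hc.exists_popTime j)).2

theorem popTime_le : hc.popTime j ≤ m :=
  Nat.find_min' _ ⟨j.isLt, by have := hc.le_self j; rw [hc.eq_of_le m le_rfl]; omega⟩

theorem add_lt_of_lt_popTime (hjx : (j : ℕ) < x) (hx : x < hc.popTime j) :
    c x + j < c j + x := by
  have := Nat.find_min (hc.exists_popTime j) hx
  simp only [not_and, not_le] at this
  exact this hjx

theorem entry_lt_apply_popTime : hc.entry j < c (hc.popTime j) := by
  have := hc.add_popTime_le (j := j)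
  have := hc.lt_popTime (j := j)
  rw [entry]
  omega

theorem entry_lt (j : Fin m) : hc.entry j < m :=
  hc.entry_lt_apply_popTime.trans_le (hc.apply_le _)

theorem entry_lt_of_popTime_le (h : hc.popTime i ≤ j) :
    hc.entry i < hc.entry j :=
  hc.entry_lt_apply_popTime.trans_le ((hc.mono h).trans (Nat.le_add_right _ _))

theorem entry_lt_of_lt_popTime (hij : i < j) (h : (j : ℕ) < hc.popTime i) :
    hc.entry j < hc.entry i := by
  have hji := add_lt_of_lt_popTime hij h
  have hi := hc.add_popTime_le (j := i)
  have hpop : hc.popTime j ≤ hc.popTime i := Nat.find_min' _ ⟨h, by omega⟩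
  have := hc.lt_popTime (j := j)
  rw [entry, entry]
  omega

theorem entry_injective : Function.Injective hc.entry := by
  intro i j hij
  by_contra hne
  wlog h : i < j generalizing i j
  · exact this hij.symm (Ne.symm hne) (lt_of_le_of_ne (not_lt.1 h) (Ne.symm hne))
  rcases lt_or_ge (j : ℕ) (hc.popTime i) with hj | hj
  · exact (entry_lt_of_lt_popTime h hj).ne hij.symm
  · exact (entry_lt_of_popTime_le hj).ne hij

noncomputable def perm (hc : IsBallotSeq m c) : Equiv.Perm (Fin m) :=
  Equiv.ofBijective (fun j => ⟨hc.entry j, hc.entry_lt j⟩)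
    (Finite.injective_iff_bijective.1 fun _ _ h => entry_injective (Fin.val_eq_of_eq h))

@[simp]
theorem val_perm_apply (j : Fin m) : (hc.perm j : ℕ) = hc.entry j := rfl

theorem perm_avoids : Avoids hc.perm ![1, 2, 0] := by
  refine (avoids_231_iff _).2 fun a b c hab hbc hca => ?_
  simp only [Fin.lt_def, val_perm_apply] at hca ⊢
  by_contra! hba
  have hpop : hc.popTime a ≤ b := not_lt.1 fun h => (entry_lt_of_lt_popTime hab h).not_ge hba
  exact (entry_lt_of_popTime_le (hpop.trans (Fin.lt_def.1 hbc).le)).asymm hca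

theorem popTime_le_iff_entry_lt : hc.popTime j ≤ x ↔ hc.entry j < c x := by
  refine ⟨fun h => hc.entry_lt_apply_popTime.trans_le (hc.mono h), fun h => not_lt.1 fun hx => ?_⟩
  rcases le_or_gt x j with hxj | hjx
  · exact (h.trans_le (hc.mono hxj)).not_ge (Nat.le_add_right _ _)
  · have := add_lt_of_lt_popTime hjx hx
    rw [entry] at h
    omega

theorem mem_belowSuffix_perm : j ∈ belowSuffix hc.perm x ↔ hc.popTime j ≤ x := by
  refine ⟨fun h => not_lt.1 fun hx => ?_, fun h => mem_belowSuffix.2 fun t ht => ?_⟩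
  · have hjx := lt_of_mem_belowSuffix h
    have hxm : x < m := hx.trans_le popTime_le
    refine (mem_belowSuffix.1 h ⟨x, hxm⟩ le_rfl).asymm ?_
    simpa [Fin.lt_def] using entry_lt_of_lt_popTime (j := ⟨x, hxm⟩) hjx hx
  · simpa [Fin.lt_def] using entry_lt_of_popTime_le (h.trans ht)

theorem outCount_perm : outCount hc.perm = c := by
  funext x
  rw [outCount, ← card_filter_apply_lt hc.perm (hc.apply_le x)]
  congr 1
  ext j
  rw [mem_belowSuffix_perm, popTime_le_iff_entry_lt, mem_filter]
  simp

end IsBallotSeq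

section Avoids231

variable {π : Equiv.Perm (Fin m)} (hπ : Avoids π ![1, 2, 0])
include hπ

theorem popTime_isBallotSeq_outCount (j : Fin m) :
    (isBallotSeq_outCount π).popTime j = popTime π j := by
  have hpop := val_apply_add_eq hπ (j := j)
  refine le_antisymm (Nat.find_min' _ ⟨lt_popTime, ?_⟩) (not_lt.1 fun h => ?_)
  · have := apply_lt_outCount_iff.2 (popTime_le_iff.1 (le_refl (popTime π j)))
    omega
  · have h₁ := (isBallotSeq_outCount π).add_popTime_le (j := j)
    have h₂ := outCount_add_lt_of_lt_popTime hπ IsBallotSeq.lt_popTime h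
    omega

theorem perm_isBallotSeq_outCount : (isBallotSeq_outCount π).perm = π := by
  ext j
  have := val_apply_add_eq hπ (j := j)
  have := lt_popTime (π := π) (j := j)
  rw [IsBallotSeq.val_perm_apply, IsBallotSeq.entry, popTime_isBallotSeq_outCount hπ]
  omega

end Avoids231

def HasRootAscents (k n : ℕ) (c : ℕ → ℕ) : Prop :=
  ∀ x < (k + 1) * n, k + 1 ∣ x → c x < c (x + 1)

theorem isKShrubForest_iff_hasRootAscents {k n : ℕ} (hk : 1 ≤ k)
    {π : Equiv.Perm (Fin ((k + 1) * n))} (hπ : Avoids π ![1, 2, 0]) :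
    IsKShrubForest k n π ↔ HasRootAscents k n (outCount π) := by
  constructor
  · rintro h x hx ⟨i, rfl⟩
    have hi : i < n := Nat.lt_of_mul_lt_mul_left hx
    have hroot := h i 1 hi le_rfl hk
    refine (outCount_lt_succ_iff hx).2 fun t ht => ?_
    rcases (Nat.succ_le_of_lt ht).lt_or_eq with ht | ht
    · by_contra! htr
      have htr : π t < π ⟨(k + 1) * i, hx⟩ :=
        lt_of_le_of_ne htr (π.injective.ne (Fin.ne_of_val_ne (by simp only [ne_eq]; omega)))
      exact hroot.asymm ((avoids_231_iff π).1 hπ _ ⟨_, leaf_lt hi hk⟩ t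
        (Fin.lt_def.2 (Nat.lt_succ_self _)) ht htr)
    · obtain rfl : t = ⟨_, leaf_lt hi hk⟩ := Fin.ext ht.symm
      exact hroot
  · intro h i j hi hj1 hj2
    exact (outCount_lt_succ_iff (root_lt hi)).1 (h _ (root_lt hi) (dvd_mul_right _ _))
      ⟨_, leaf_lt hi hj2⟩ (by simp only; omega)

theorem succ_ceilDiv_succ (k x : ℕ) :
    (x + 1) ⌈/⌉ (k + 1) = x ⌈/⌉ (k + 1) + if k + 1 ∣ x then 1 else 0 := by
  simp only [Nat.ceilDiv_eq_add_pred_div]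
  rw [show x + 1 + (k + 1) - 1 = x + k + 1 by omega, show x + (k + 1) - 1 = x + k by omega,
    Nat.succ_div, show x + k + 1 = x + (k + 1) by omega]
  simp only [Nat.dvd_add_self_right]

theorem add_ceilDiv_le_iff {k x s : ℕ} : s + x ⌈/⌉ (k + 1) ≤ x ↔ (k + 1) * s ≤ k * x := by
  rcases le_or_gt s x with hsx | hxs
  · obtain ⟨d, rfl⟩ := Nat.exists_eq_add_of_le hsx
    rw [Nat.add_le_add_iff_left, ceilDiv_le_iff_le_mul (Nat.succ_pos k)]
    constructor <;> intro h <;> nlinarith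
  · refine iff_of_false (by omega) (not_le.2 ?_)
    nlinarith

theorem mul_ceilDiv_self (k n : ℕ) : ((k + 1) * n) ⌈/⌉ (k + 1) = n :=
  smul_ceilDiv (Nat.succ_pos k) n

structure IsSubdiagonal (k n : ℕ) (e : List ℕ) : Prop where
  length_eq : e.length = (k + 1) * n
  sum_eq : e.sum = k * n
  mul_sum_take_le : ∀ x, (k + 1) * (e.take x).sum ≤ k * x

/-- The increases of `c`, less the increase by one that is forced at the roots. -/
def increments (k m : ℕ) (c : ℕ → ℕ) : List ℕ :=
  (List.range m).map fun x => c (x + 1) - (c x + if k + 1 ∣ x then 1 else 0)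

theorem length_increments (k m : ℕ) (c : ℕ → ℕ) : (increments k m c).length = m := by
  simp [increments]

def prefixCount (k : ℕ) (e : List ℕ) (x : ℕ) : ℕ :=
  (e.take x).sum + min x e.length ⌈/⌉ (k + 1)

variable {k n : ℕ} {c : ℕ → ℕ} {e : List ℕ}

theorem le_succ_of_hasRootAscents (hc : IsBallotSeq ((k + 1) * n) c) (hr : HasRootAscents k n c)
    {x : ℕ} (hx : x < (k + 1) * n) : c x + (if k + 1 ∣ x then 1 else 0) ≤ c (x + 1) := by
  split_ifs with hdvd
  · exact hr x hx hdvd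
  · exact hc.mono x.le_succ

theorem sum_take_increments_add (hc : IsBallotSeq ((k + 1) * n) c) (hr : HasRootAscents k n c)
    {x : ℕ} (hx : x ≤ (k + 1) * n) :
    ((increments k ((k + 1) * n) c).take x).sum + x ⌈/⌉ (k + 1) = c x := by
  induction x with
  | zero => simpa using (Nat.le_zero.1 (hc.le_self 0)).symm
  | succ x ih =>
    have hlen : x < (increments k ((k + 1) * n) c).length := by rw [length_increments]; omega
    have hstep := le_succ_of_hasRootAscents hc hr (x := x) (by omega)
    have hget : (increments k ((k + 1) * n) c)[x] =
        c (x + 1) - (c x + if k + 1 ∣ x then 1 else 0) := by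
      simp [increments]
    have := ih (by omega)
    rw [List.sum_take_succ _ _ hlen, succ_ceilDiv_succ, hget]
    omega

theorem isSubdiagonal_increments (hc : IsBallotSeq ((k + 1) * n) c) (hr : HasRootAscents k n c) :
    IsSubdiagonal k n (increments k ((k + 1) * n) c) := by
  have hlen := length_increments k ((k + 1) * n) c
  have hsum := sum_take_increments_add hc hr le_rfl
  rw [List.take_of_length_le hlen.le, mul_ceilDiv_self, hc.eq_of_le _ le_rfl] at hsum
  refine ⟨hlen, by linarith, fun x => ?_⟩
  rcases le_or_gt x ((k + 1) * n) with hx | hx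
  · exact add_ceilDiv_le_iff.1 ((sum_take_increments_add hc hr hx).trans_le (hc.le_self x))
  · rw [List.take_of_length_le (by omega)]
    nlinarith

theorem prefixCount_of_le (he : IsSubdiagonal k n e) {x : ℕ} (hx : (k + 1) * n ≤ x) :
    prefixCount k e x = (k + 1) * n := by
  rw [prefixCount, List.take_of_length_le (he.length_eq ▸ hx), he.sum_eq, he.length_eq,
    min_eq_right hx, mul_ceilDiv_self]
  ring

theorem prefixCount_succ (he : IsSubdiagonal k n e) {x : ℕ} (hx : x < (k + 1) * n) :
    prefixCount k e (x + 1) = prefixCount k e x + e[x]'(he.length_eq ▸ hx)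
      + if k + 1 ∣ x then 1 else 0 := by
  have hlen := he.length_eq
  rw [prefixCount, prefixCount, List.sum_take_succ _ _ (by omega),
    min_eq_left (by omega : x + 1 ≤ e.length), min_eq_left (by omega : x ≤ e.length),
    succ_ceilDiv_succ]
  ring

theorem isBallotSeq_prefixCount (he : IsSubdiagonal k n e) :
    IsBallotSeq ((k + 1) * n) (prefixCount k e) := by
  refine ⟨monotone_nat_of_le_succ fun x => ?_, fun x => ?_, fun x => prefixCount_of_le he⟩
  · rcases lt_or_ge x ((k + 1) * n) with hx | hx
    · rw [prefixCount_succ he hx]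
      omega
    · rw [prefixCount_of_le he hx, prefixCount_of_le he (hx.trans x.le_succ)]
  · rcases le_or_gt x ((k + 1) * n) with hx | hx
    · rw [prefixCount, he.length_eq, min_eq_left hx]
      exact add_ceilDiv_le_iff.2 (he.mul_sum_take_le x)
    · rw [prefixCount_of_le he hx.le]
      exact hx.le

theorem hasRootAscents_prefixCount (he : IsSubdiagonal k n e) :
    HasRootAscents k n (prefixCount k e) := fun x hx hdvd => by
  rw [prefixCount_succ he hx, if_pos hdvd]
  omega

theorem increments_prefixCount (he : IsSubdiagonal k n e) :
    increments k ((k + 1) * n) (prefixCount k e) = e := by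
  refine List.ext_getElem (by rw [length_increments, he.length_eq]) fun x _ h₂ => ?_
  have hx : x < (k + 1) * n := he.length_eq ▸ h₂
  simp only [increments, List.getElem_map, List.getElem_range, prefixCount_succ he hx]
  omega

theorem prefixCount_increments (hc : IsBallotSeq ((k + 1) * n) c) (hr : HasRootAscents k n c) :
    prefixCount k (increments k ((k + 1) * n) c) = c := by
  funext x
  rcases le_or_gt x ((k + 1) * n) with hx | hx
  · rw [prefixCount, length_increments, min_eq_left hx, sum_take_increments_add hc hr hx]
  · rw [prefixCount_of_le (isSubdiagonal_increments hc hr) hx.le, hc.eq_of_le _ hx.le]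

noncomputable def shrubForestEquivBallotSeq (hk : 1 ≤ k) :
    {π : Equiv.Perm (Fin ((k + 1) * n)) // IsKShrubForest k n π ∧ Avoids π ![1, 2, 0]} ≃
      {c : ℕ → ℕ // IsBallotSeq ((k + 1) * n) c ∧ HasRootAscents k n c} where
  toFun π := ⟨outCount π.1, isBallotSeq_outCount π.1,
    (isKShrubForest_iff_hasRootAscents hk π.2.2).1 π.2.1⟩
  invFun c := ⟨c.2.1.perm, (isKShrubForest_iff_hasRootAscents hk IsBallotSeq.perm_avoids).2
    (IsBallotSeq.outCount_perm ▸ c.2.2), IsBallotSeq.perm_avoids⟩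
  left_inv π := Subtype.ext (perm_isBallotSeq_outCount π.2.2)
  right_inv _ := Subtype.ext IsBallotSeq.outCount_perm

def ballotSeqEquivSubdiagonal (k n : ℕ) :
    {c : ℕ → ℕ // IsBallotSeq ((k + 1) * n) c ∧ HasRootAscents k n c} ≃
      {e : List ℕ // IsSubdiagonal k n e} where
  toFun c := ⟨increments k ((k + 1) * n) c.1, isSubdiagonal_increments c.2.1 c.2.2⟩
  invFun e := ⟨prefixCount k e.1, isBallotSeq_prefixCount e.2, hasRootAscents_prefixCount e.2⟩
  left_inv c := Subtype.ext (prefixCount_increments c.2.1 c.2.2)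
  right_inv e := Subtype.ext (increments_prefixCount e.2)

open List

def IsSubdiagonalPath (k n : ℕ) (p : List (ℤ × ℤ)) : Prop :=
  (∀ s ∈ p, s = ((1 : ℤ), (0 : ℤ)) ∨ s = ((0 : ℤ), (1 : ℤ))) ∧
  p.sum = (((k + 1) * n : ℤ), ((k * n : ℕ) : ℤ)) ∧
  ∀ i : ℕ, ((k : ℤ) + 1) * ((p.take i).sum).2 ≤ (k : ℤ) * ((p.take i).sum).1

def block (a : ℕ) : List (ℤ × ℤ) := (1, 0) :: replicate a (0, 1)

def toPath (e : List ℕ) : List (ℤ × ℤ) := e.flatMap block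

theorem sum_replicate_north (a : ℕ) : (replicate a ((0 : ℤ), (1 : ℤ))).sum = (0, (a : ℤ)) := by
  simp [sum_replicate]

theorem sum_toPath (e : List ℕ) : (toPath e).sum = ((e.length : ℤ), (e.sum : ℤ)) := by
  induction e with
  | nil => rfl
  | cons a e ih =>
    simp only [toPath, flatMap_cons, sum_append] at ih ⊢
    rw [ih, block, List.sum_cons, sum_replicate_north]
    simp only [Prod.mk_add_mk, length_cons, List.sum_cons, Prod.mk.injEq]
    constructor <;> push_cast <;> ring

theorem mem_toPath {e : List ℕ} {s : ℤ × ℤ} (hs : s ∈ toPath e) : s = (1, 0) ∨ s = (0, 1) := by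
  obtain ⟨a, -, hs⟩ := mem_flatMap.1 hs
  rcases mem_cons.1 hs with hs | hs
  · exact Or.inl hs
  · exact Or.inr (eq_of_mem_replicate hs)

theorem toPath_injective : Function.Injective toPath := by
  have hsplit : ∀ e, (toPath e).splitBy (fun _ y => y == (0, 1)) = e.map block := by
    intro e
    refine splitBy_flatten (by simp [block]) ?_ ?_
    · simp only [List.mem_map]
      rintro _ ⟨a, -, rfl⟩
      simp only [block, isChain_cons]
      refine ⟨fun y hy => ?_, isChain_replicate_of_rel _ rfl⟩
      cases a <;> simp_all [replicate_succ]
    · rw [isChain_map]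
      exact Pairwise.isChain (pairwise_of_forall fun _ _ =>
        ⟨by simp [block], by simp [block], by simp [block]⟩)
  intro e e' h
  have := hsplit e
  rw [h, hsplit e'] at this
  exact (map_injective_iff.2 fun a b h => by simpa [block] using congrArg length h) this.symm

theorem exists_sum_take_toPath (e : List ℕ) (i : ℕ) :
    ∃ x y : ℕ, ((toPath e).take i).sum = ((x : ℤ), (y : ℤ)) ∧ y ≤ (e.take x).sum := by
  induction e generalizing i with
  | nil => exact ⟨0, 0, by simp [toPath]; rfl, le_rfl⟩
  | cons a e ih =>
    rcases i with _ | i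
    · exact ⟨0, 0, by simp; rfl, le_rfl⟩
    simp only [toPath, flatMap_cons, block, cons_append, take_succ_cons, List.sum_cons] at ih ⊢
    rcases le_or_gt i a with hia | hai
    · refine ⟨1, i, ?_, by simpa using hia⟩
      rw [take_append_of_le_length (by simpa using hia), take_replicate, min_eq_left hia,
        sum_replicate_north]
      simp
    · obtain ⟨x, y, hxy, hy⟩ := ih (i - a)
      refine ⟨x + 1, a + y, ?_, by simpa using hy⟩
      rw [take_append, length_replicate, take_of_length_le (by simpa using hai.le),
        sum_append, sum_replicate_north, hxy]
      simp only [Prod.mk_add_mk, Prod.mk.injEq]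
      constructor <;> push_cast <;> ring

theorem sum_take_toPath_take {e : List ℕ} {x : ℕ} (hx : x ≤ e.length) :
    ((toPath e).take (toPath (e.take x)).length).sum = ((x : ℤ), ((e.take x).sum : ℤ)) := by
  have hsplit : toPath e = toPath (e.take x) ++ toPath (e.drop x) := by
    rw [toPath, toPath, toPath, ← flatMap_append, take_append_drop]
  rw [hsplit, take_left, sum_toPath, length_take, min_eq_left hx]

theorem isSubdiagonalPath_toPath_iff {k n : ℕ} {e : List ℕ} :
    IsSubdiagonalPath k n (toPath e) ↔ IsSubdiagonal k n e := by
  constructor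
  · rintro ⟨-, hsum, hslope⟩
    rw [sum_toPath, Prod.mk.injEq] at hsum
    have hlen : e.length = (k + 1) * n := by exact_mod_cast hsum.1
    have hesum : e.sum = k * n := by exact_mod_cast hsum.2
    refine ⟨hlen, hesum, fun x => ?_⟩
    rcases le_or_gt x e.length with hx | hx
    · have := hslope (toPath (e.take x)).length
      rw [sum_take_toPath_take hx] at this
      dsimp only at this
      exact_mod_cast this
    · rw [take_of_length_le hx.le, hesum]
      rw [hlen] at hx
      nlinarith
  · rintro ⟨hlen, hesum, hslope⟩
    refine ⟨fun s hs => mem_toPath hs, ?_, fun i => ?_⟩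
    · rw [sum_toPath, hlen, hesum]
      push_cast
      rfl
    · obtain ⟨x, y, hxy, hy⟩ := exists_sum_take_toPath e i
      rw [hxy]
      dsimp only
      exact_mod_cast (Nat.mul_le_mul_left _ hy).trans (hslope x)

theorem exists_eq_replicate_append_toPath {p : List (ℤ × ℤ)}
    (hp : ∀ s ∈ p, s = ((1 : ℤ), (0 : ℤ)) ∨ s = ((0 : ℤ), (1 : ℤ))) :
    ∃ a e, p = replicate a ((0 : ℤ), (1 : ℤ)) ++ toPath e := by
  induction p with
  | nil => exact ⟨0, [], rfl⟩
  | cons s p ih =>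
    obtain ⟨a, e, rfl⟩ := ih fun t ht => hp t (mem_cons_of_mem s ht)
    rcases hp s mem_cons_self with rfl | rfl
    · exact ⟨0, a :: e, rfl⟩
    · exact ⟨a + 1, e, rfl⟩

theorem exists_toPath_eq {k n : ℕ} {p : List (ℤ × ℤ)} (hp : IsSubdiagonalPath k n p) :
    ∃ e, toPath e = p := by
  obtain ⟨a, e, rfl⟩ := exists_eq_replicate_append_toPath hp.1
  rcases a with _ | a
  · exact ⟨e, rfl⟩
  · have := hp.2.2 1
    simp only [replicate_succ, cons_append, take_succ_cons, take_zero, List.sum_cons, sum_nil,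
      add_zero, mul_one, mul_zero] at this
    omega

noncomputable def subdiagonalEquivPath (k n : ℕ) :
    {e : List ℕ // IsSubdiagonal k n e} ≃ {p : List (ℤ × ℤ) // IsSubdiagonalPath k n p} :=
  Equiv.ofBijective (fun e => ⟨toPath e, isSubdiagonalPath_toPath_iff.2 e.2⟩)
    ⟨fun _ _ h => Subtype.ext (toPath_injective (congrArg Subtype.val h)), fun p => by
      obtain ⟨e, he⟩ := exists_toPath_eq p.2
      exact ⟨⟨e, isSubdiagonalPath_toPath_iff.1 (he ▸ p.2)⟩, Subtype.ext he⟩⟩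

end ShrubForest

/-- The number of 231-avoiding `k`-ary shrub forests of `n` shrubs equals the number of
NE lattice paths from `(0,0)` to `((k+1)n, kn)` staying weakly below the line
`y = (k/(k+1))x`, i.e. with `(k+1)y ≤ kx` at every visited point. -/
theorem card_kShrubForests_avoiding_231_eq_paths (k n : ℕ) (hk : 2 ≤ k) :
    Nat.card { π : Equiv.Perm (Fin ((k+1)*n)) //
        IsKShrubForest k n π ∧ Avoids π (![1, 2, 0] : Fin 3 → Fin 3) } =
      Nat.card { p : List (ℤ × ℤ) //
        (∀ s ∈ p, s = ((1 : ℤ), (0 : ℤ)) ∨ s = ((0 : ℤ), (1 : ℤ))) ∧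
        p.sum = (((k+1)*n : ℤ), ((k*n : ℕ) : ℤ)) ∧
        ∀ i : ℕ, ((k : ℤ) + 1) * ((p.take i).sum).2 ≤ (k : ℤ) * ((p.take i).sum).1 } :=
  Nat.card_congr (((ShrubForest.shrubForestEquivBallotSeq (by omega)).trans
    (ShrubForest.ballotSeqEquivSubdiagonal k n)).trans (ShrubForest.subdiagonalEquivPath k n))
end
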